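/- Let Λ be a compactly aligned topological k-graph, A a locally compact group, c : Λ → A a continuous functor, and c̃ : G_Λ → A the induced continuous functor. Then the skew-product groupoid G_Λ(c̃) is isomorphic as a topological groupoid to the path groupoid G_{Λ ×_c A} of the skew-product k-graph, via the map sending ((λx, d(λ)−d(μ), μx), a) to (φ(λx, a), d(λ)−d(μ), φ(μx, a·c(λ)c(μ)^{-1})), where φ(x, a)(m, n) = (x(m,n), a·c(x(0,m))). -/

import Mathlib

open Set

namespace TKG

/-- A topological `k`-graph: a small category with objects `Obj` and morphisms `Mor`,
a degree functor `d : Mor → ℕ^k` satisfying the unique factorization property, with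
second-countable locally compact Hausdorff topologies making the structure maps suitably
continuous, the source map a local homeomorphism and composition continuous and open. -/
structure TopKGraph (k : ℕ) (Obj Mor : Type)
    [TopologicalSpace Obj] [TopologicalSpace Mor] where
  r : Mor → Obj
  s : Mor → Obj
  ident : Obj → Mor
  comp : ∀ f g : Mor, s f = r g → Mor
  d : Mor → Fin k → ℕ
  r_ident : ∀ v, r (ident v) = v
  s_ident : ∀ v, s (ident v) = v
  d_ident : ∀ v, d (ident v) = 0
  r_comp : ∀ f g h, r (comp f g h) = r f
  s_comp : ∀ f g h, s (comp f g h) = s g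
  d_comp : ∀ f g h, d (comp f g h) = d f + d g
  ident_comp : ∀ (f : Mor) (h : s (ident (r f)) = r f), comp (ident (r f)) f h = f
  comp_ident : ∀ (f : Mor) (h : s f = r (ident (s f))), comp f (ident (s f)) h = f
  comp_assoc : ∀ (f g h : Mor) (hfg : s f = r g) (hgh : s g = r h)
    (h1 : s (comp f g hfg) = r h) (h2 : s f = r (comp g h hgh)),
    comp (comp f g hfg) h h1 = comp f (comp g h hgh) h2
  factor : ∀ (f : Mor) (m n : Fin k → ℕ), d f = m + n →
    ∃! gh : Mor × Mor, ∃ h : s gh.1 = r gh.2,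
      comp gh.1 gh.2 h = f ∧ d gh.1 = m ∧ d gh.2 = n
  secondCountableObj : SecondCountableTopology Obj
  secondCountableMor : SecondCountableTopology Mor
  locallyCompactObj : LocallyCompactSpace Obj
  locallyCompactMor : LocallyCompactSpace Mor
  t2Obj : T2Space Obj
  t2Mor : T2Space Mor
  continuous_r : Continuous r
  continuous_s : Continuous s
  isLocalHomeomorph_s : IsLocalHomeomorph s
  continuous_comp : Continuous fun p : {p : Mor × Mor // s p.1 = r p.2} => comp p.1.1 p.1.2 p.2
  isOpenMap_comp : IsOpenMap fun p : {p : Mor × Mor // s p.1 = r p.2} => comp p.1.1 p.1.2 p.2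
  continuous_d : Continuous d

variable {k : ℕ} {Obj Mor : Type} [TopologicalSpace Obj] [TopologicalSpace Mor]

/-- `Λ^{min}(λ,μ)`: the pairs `(α,β)` with `λα = μβ` and `d(λα) = d(λ) ⊔ d(μ)`. -/
def MinExt (Λ : TopKGraph k Obj Mor) (l m : Mor) : Set (Mor × Mor) :=
  {ab | ∃ (h1 : Λ.s l = Λ.r ab.1) (h2 : Λ.s m = Λ.r ab.2),
      Λ.comp l ab.1 h1 = Λ.comp m ab.2 h2 ∧ Λ.d l + Λ.d ab.1 = Λ.d l ⊔ Λ.d m}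

/-- `E ∨ F`: the set of minimal common extensions of paths from `E` and from `F`. -/
def MCE (Λ : TopKGraph k Obj Mor) (E F : Set Mor) : Set Mor :=
  {f | ∃ l ∈ E, ∃ m ∈ F, Λ.d f = Λ.d l ⊔ Λ.d m ∧
        (∃ (a : Mor) (h : Λ.s l = Λ.r a), Λ.comp l a h = f) ∧
        (∃ (b : Mor) (h : Λ.s m = Λ.r b), Λ.comp m b h = f)}

/-- `Λ` is compactly aligned: `U ∨ V` is compact for all compact `U ⊆ Λ^p`, `V ⊆ Λ^q`. -/
def CompactlyAligned (Λ : TopKGraph k Obj Mor) : Prop :=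
  ∀ (p q : Fin k → ℕ) (U V : Set Mor), U ⊆ {f | Λ.d f = p} → V ⊆ {f | Λ.d f = q} →
    IsCompact U → IsCompact V → IsCompact (MCE Λ U V)

/-- `Λ` is finitely aligned: `Λ^{min}(λ,μ)` is finite for all `λ, μ`. -/
def FinitelyAligned (Λ : TopKGraph k Obj Mor) : Prop :=
  ∀ l m : Mor, (MinExt Λ l m).Finite

/-- An element of the path space `X_Λ`: a degree-preserving functor from `Ω_{k,m}` to `Λ`,
recorded by its degree `m ∈ (ℕ ∪ {∞})^k` and its segments `x(p,q)` for `p ≤ q ≤ m`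
(with a fixed junk value outside the domain, so that paths are determined by their
segments on their domain). -/
structure KPath (Λ : TopKGraph k Obj Mor) where
  deg : Fin k → ℕ∞
  seg : (Fin k → ℕ) → (Fin k → ℕ) → Mor
  seg_junk : ∀ p q, ¬(p ≤ q ∧ ∀ i, (q i : ℕ∞) ≤ deg i) → seg p q = seg 0 0
  d_seg : ∀ p q, p ≤ q → (∀ i, (q i : ℕ∞) ≤ deg i) → Λ.d (seg p q) = q - p
  seg_comp : ∀ p q u, p ≤ q → q ≤ u → (∀ i, (u i : ℕ∞) ≤ deg i) →
    ∃ h : Λ.s (seg p q) = Λ.r (seg q u), Λ.comp (seg p q) (seg q u) h = seg p u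
  seg_ident : ∀ p, (∀ i, (p i : ℕ∞) ≤ deg i) → seg p p = Λ.ident (Λ.r (seg p p))

variable {Λ : TopKGraph k Obj Mor}

/-- `q` is in the domain of the path `x`, i.e. `q ≤ d(x)`. -/
def KPath.dom (x : KPath Λ) (q : Fin k → ℕ) : Prop := ∀ i, (q i : ℕ∞) ≤ x.deg i

/-- The range vertex `r(x) = x(0)` of a path. -/
def KPath.rng (x : KPath Λ) : Obj := Λ.r (x.seg 0 0)

/-- The vertex `x(m)` of a path. -/
def KPath.vtx (x : KPath Λ) (m : Fin k → ℕ) : Obj := Λ.r (x.seg m m)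

/-- `y = σ^m x`, the shift of `x` by `m ≤ d(x)`. -/
def IsShiftOf (m : Fin k → ℕ) (x y : KPath Λ) : Prop :=
  (∀ i, (m i : ℕ∞) ≤ x.deg i) ∧ (∀ i, y.deg i = x.deg i - (m i : ℕ∞)) ∧
  ∀ p q, p ≤ q → (∀ i, (q i : ℕ∞) ≤ y.deg i) → y.seg p q = x.seg (m + p) (m + q)

/-- `y = λ x`, the concatenation of the morphism `λ` with the path `x` (so `s(λ) = r(x)`),
characterized by `d(y) = d(λ) + d(x)`, `y(0,p)` an initial segment of `λ` for `p ≤ d(λ)`,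
and `y(0,p) = λ ⬝ x(0, p - d(λ))` for `d(λ) ≤ p ≤ d(y)`. -/
def IsConcatOf (l : Mor) (x y : KPath Λ) : Prop :=
  Λ.s l = x.rng ∧ (∀ i, y.deg i = (Λ.d l i : ℕ∞) + x.deg i) ∧
  (∀ p, p ≤ Λ.d l →
    ∃ (a : Mor) (h : Λ.s (y.seg 0 p) = Λ.r a),
      Λ.d (y.seg 0 p) = p ∧ Λ.comp (y.seg 0 p) a h = l) ∧
  (∀ p, Λ.d l ≤ p → (∀ i, (p i : ℕ∞) ≤ y.deg i) →
    ∃ h : Λ.s l = Λ.r (x.seg 0 (p - Λ.d l)),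
      y.seg 0 p = Λ.comp l (x.seg 0 (p - Λ.d l)) h)

/-- `E` is exhaustive for a set `V` of vertices. -/
def Exhaustive (Λ : TopKGraph k Obj Mor) (V : Set Obj) (E : Set Mor) : Prop :=
  ∀ l : Mor, Λ.r l ∈ V → ∃ m ∈ E, (MinExt Λ l m).Nonempty

/-- `v CE(Λ)`: compact sets `E` with `r(E)` a neighbourhood of `v` and `E` exhaustive
for `r(E)`. -/
def CE (Λ : TopKGraph k Obj Mor) (v : Obj) : Set (Set Mor) :=
  {E | IsCompact E ∧ Λ.r '' E ∈ nhds v ∧ Exhaustive Λ (Λ.r '' E) E}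

/-- `x` is a boundary path: for every `m ≤ d(x)` and every `E ∈ x(m)CE(Λ)` there is
`λ ∈ E` with `x(m, m + d(λ)) = λ`. -/
def IsBoundary (x : KPath Λ) : Prop :=
  ∀ m : Fin k → ℕ, x.dom m → ∀ E ∈ CE Λ (x.vtx m),
    ∃ l ∈ E, x.dom (m + Λ.d l) ∧ x.seg m (m + Λ.d l) = l

/-- `Z(W)`: the set of paths with an initial segment in `W`. -/
def ZSet (Λ : TopKGraph k Obj Mor) (W : Set Mor) : Set (KPath Λ) :=
  {x | ∃ l ∈ W, x.dom (Λ.d l) ∧ x.seg 0 (Λ.d l) = l}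

/-- The topology on the path space `X_Λ`, generated by the sets `Z(U) ∩ Z(F)ᶜ` for
`U ⊆ Λ` open and `F ⊆ Λ` compact. -/
def pathTopology (Λ : TopKGraph k Obj Mor) : TopologicalSpace (KPath Λ) :=
  TopologicalSpace.generateFrom
    {S | ∃ U F : Set Mor, IsOpen U ∧ IsCompact F ∧ S = ZSet Λ U ∩ (ZSet Λ F)ᶜ}

/-- The ambient space of triples for the path groupoid. -/
abbrev GTriple (Λ : TopKGraph k Obj Mor) : Type :=
  KPath Λ × (Fin k → ℤ) × KPath Λ

/-- The path groupoid `G_Λ` as a set of triples `(x, m, y)` such that `σ^p x = σ^q y`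
for some `p ≤ d(x)`, `q ≤ d(y)` with `p - q = m`. -/
def PathGroupoidCarrier (Λ : TopKGraph k Obj Mor) : Set (GTriple Λ) :=
  {t | ∃ p q : Fin k → ℕ, t.2.1 = (fun i => (p i : ℤ) - (q i : ℤ)) ∧
        ∃ z : KPath Λ, IsShiftOf p t.1 z ∧ IsShiftOf q t.2.2 z}

/-- `Z(F, m) = {(λx, d(λ)-d(μ), μx) : (λ,μ) ∈ F, d(λ)-d(μ) = m}`. -/
def ZG (Λ : TopKGraph k Obj Mor) (F : Set (Mor × Mor)) (m : Fin k → ℤ) :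
    Set (GTriple Λ) :=
  {t | t.2.1 = m ∧ ∃ lm ∈ F, Λ.s lm.1 = Λ.s lm.2 ∧
        (fun i => (Λ.d lm.1 i : ℤ) - (Λ.d lm.2 i : ℤ)) = m ∧
        ∃ x : KPath Λ, IsConcatOf lm.1 x t.1 ∧ IsConcatOf lm.2 x t.2.2}

/-- The topology on the path groupoid `G_Λ`, generated by the sets
`Z(U *ₛ V, m) ∩ Z(F, m)ᶜ` with `U, V` open and `F ⊆ Λ *ₛ Λ` compact. -/
def groupoidTopology (Λ : TopKGraph k Obj Mor) : TopologicalSpace (GTriple Λ) :=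
  TopologicalSpace.generateFrom
    {S | ∃ (m : Fin k → ℤ) (U V : Set Mor) (F : Set (Mor × Mor)),
      IsOpen U ∧ IsOpen V ∧ IsCompact F ∧
      S = ZG Λ ((U ×ˢ V) ∩ {lm | Λ.s lm.1 = Λ.s lm.2}) m ∩ (ZG Λ F m)ᶜ}

/-- A boundary path `x` is aperiodic if `σ^p x ≠ σ^q x` whenever `p ≠ q`,
`p, q ≤ d(x)`. -/
def Aperiodic (x : KPath Λ) : Prop :=
  ∀ p q : Fin k → ℕ, x.dom p → x.dom q → p ≠ q →
    ¬∃ z : KPath Λ, IsShiftOf p x z ∧ IsShiftOf q x z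

/-- `Λ` is proper: `U Λ^m` is compact for every compact `U ⊆ Λ^0` and `m ∈ ℕ^k`. -/
def ProperGraph (Λ : TopKGraph k Obj Mor) : Prop :=
  ∀ (m : Fin k → ℕ) (U : Set Obj), IsCompact U →
    IsCompact {f : Mor | Λ.d f = m ∧ Λ.r f ∈ U}

/-- `Λ` has no sources: every vertex receives an edge of each degree `e_i`. -/
def NoSources (Λ : TopKGraph k Obj Mor) : Prop :=
  ∀ (v : Obj) (i : Fin k), ∃ f : Mor, Λ.d f = Pi.single i 1 ∧ Λ.r f = v

/-- The set `Ext(E; F)` of minimal extenders of `E` by `F`. -/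
def ExtSet (Λ : TopKGraph k Obj Mor) (E F : Set Mor) : Set Mor :=
  {a | ∃ l ∈ E, ∃ m ∈ F, ∃ b : Mor, (a, b) ∈ MinExt Λ l m}

end TKG

namespace TKG

variable {k : ℕ} {Obj Mor : Type} [TopologicalSpace Obj] [TopologicalSpace Mor]

/-- The path groupoid `G_Λ` as a topological space (subspace of the triple space). -/
def PathGpd (Λ : TopKGraph k Obj Mor) : Type :=
  {t : GTriple Λ // t ∈ PathGroupoidCarrier Λ}

instance (Λ : TopKGraph k Obj Mor) : TopologicalSpace (PathGpd Λ) :=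
  TopologicalSpace.induced Subtype.val (groupoidTopology Λ)

/-- The boundary-path groupoid `𝒢_Λ = G_Λ|_{∂Λ}` as a topological space. -/
def BdryGpd (Λ : TopKGraph k Obj Mor) : Type :=
  {t : GTriple Λ // t ∈ PathGroupoidCarrier Λ ∧ IsBoundary t.1 ∧ IsBoundary t.2.2}

instance (Λ : TopKGraph k Obj Mor) : TopologicalSpace (BdryGpd Λ) :=
  TopologicalSpace.induced Subtype.val (groupoidTopology Λ)

/-- `X = φ(x, a)`: the path of the skew-product graph `Λ ×_c A` determined by a path
`x` of `Λ` and `a ∈ A`, via `φ(x,a)(m,n) = (x(m,n), a·c(x(0,m)))`. -/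
def IsPhiOf {A : Type} [TopologicalSpace A] [Group A]
    (Λ : TopKGraph k Obj Mor) (SP : TopKGraph k (Obj × A) (Mor × A))
    (c : Mor → A) (x : KPath Λ) (a : A) (X : KPath SP) : Prop :=
  X.deg = x.deg ∧ ∀ p q : Fin k → ℕ, p ≤ q → x.dom q →
    X.seg p q = (x.seg p q, a * c (x.seg 0 p))

end TKG

namespace TKG

/-! ### Auxiliary lemmas for the skew-product theorem -/

section AuxEnat

theorem enat_le_sub_iff {a : ℕ∞} {n m : ℕ} (h : (n : ℕ∞) ≤ a) :
    (m : ℕ∞) ≤ a - (n : ℕ∞) ↔ ((n + m : ℕ) : ℕ∞) ≤ a := by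
  cases a with
  | top => simp
  | coe b =>
    have hnb : n ≤ b := by exact_mod_cast h
    rw [← ENat.coe_sub, Nat.cast_le, Nat.cast_le]
    omega

theorem enat_add_sub_cancel {a : ℕ∞} {n : ℕ} : ((n : ℕ∞) + a) - (n : ℕ∞) = a := by
  cases a with
  | top => simp
  | coe b => rw [← Nat.cast_add, ← ENat.coe_sub]; congr 1; omega

theorem enat_add_sub_cancel_of_le {a : ℕ∞} {n : ℕ} (h : (n : ℕ∞) ≤ a) :
    (n : ℕ∞) + (a - (n : ℕ∞)) = a := by
  cases a with
  | top => simp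
  | coe b =>
    have hnb : n ≤ b := by exact_mod_cast h
    rw [← ENat.coe_sub, ← Nat.cast_add, Nat.cast_inj]
    omega

end AuxEnat

section AuxBasic

variable {k : ℕ} {Obj Mor : Type} [TopologicalSpace Obj] [TopologicalSpace Mor]
variable {Λ : TopKGraph k Obj Mor}

theorem KPath.dom_zero (x : KPath Λ) : x.dom 0 := fun i => by simp

theorem KPath.dom_mono {x : KPath Λ} {p q : Fin k → ℕ} (h : p ≤ q) (hq : x.dom q) :
    x.dom p := fun i => le_trans (by exact_mod_cast h i) (hq i)

/-- Extensionality for `KPath`: determined by degree and segments on the domain. -/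
theorem KPath.eq_of {x y : KPath Λ} (hdeg : x.deg = y.deg)
    (hseg : ∀ p q, p ≤ q → y.dom q → x.seg p q = y.seg p q) : x = y := by
  have h00 : x.seg 0 0 = y.seg 0 0 := hseg 0 0 le_rfl y.dom_zero
  have hs : x.seg = y.seg := by
    funext p q
    by_cases h : p ≤ q ∧ ∀ i, (q i : ℕ∞) ≤ y.deg i
    · exact hseg p q h.1 h.2
    · rw [x.seg_junk p q (by rw [hdeg]; exact h), y.seg_junk p q h, h00]
  cases x; cases y
  simp only [KPath.mk.injEq] at *
  exact ⟨hdeg, hs⟩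

/-- Right cancellation in composition (by unique factorization). -/
theorem comp_right_cancel {f g g' : Mor} (h : Λ.s f = Λ.r g) (h' : Λ.s f = Λ.r g')
    (hdg : Λ.d g = Λ.d g') (he : Λ.comp f g h = Λ.comp f g' h') : g = g' := by
  obtain ⟨p, _, hu⟩ := Λ.factor (Λ.comp f g h) (Λ.d f) (Λ.d g) (Λ.d_comp f g h)
  have h1 := hu (f, g) ⟨h, rfl, rfl, rfl⟩
  have h2 := hu (f, g') ⟨h', he.symm, rfl, hdg.symm⟩
  have := h1.trans h2.symm
  exact congrArg Prod.snd this

/-- If `comp f g = e` with `d g = 0` then `f = e`. -/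
theorem eq_of_comp_eq_dzero {f g e : Mor} (h : Λ.s f = Λ.r g) (hg : Λ.d g = 0)
    (he : Λ.comp f g h = e) : f = e := by
  have hde : Λ.d e = Λ.d f + 0 := by rw [← he, Λ.d_comp, hg]
  obtain ⟨p, _, hu⟩ := Λ.factor e (Λ.d f) 0 hde
  have h1 := hu (f, g) ⟨h, he, rfl, hg⟩
  have hre : Λ.s e = Λ.r (Λ.ident (Λ.s e)) := by rw [Λ.r_ident]
  have h2 := hu (e, Λ.ident (Λ.s e)) ⟨hre, Λ.comp_ident e hre, by rw [hde, add_zero], Λ.d_ident _⟩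
  exact congrArg Prod.fst (h1.trans h2.symm)

/-- If `comp f g = f` then `g` is the identity at `s f`. -/
theorem eq_ident_of_comp_eq_self {f g : Mor} (h : Λ.s f = Λ.r g)
    (he : Λ.comp f g h = f) : g = Λ.ident (Λ.s f) := by
  have hdg : Λ.d g = 0 := by
    have := Λ.d_comp f g h
    rw [he] at this
    have := add_left_cancel (a := Λ.d f) (b := Λ.d g) (c := 0) (by rw [add_zero, ← this])
    exact this
  have hde : Λ.d f = Λ.d f + 0 := by rw [add_zero]
  obtain ⟨p, _, hu⟩ := Λ.factor f (Λ.d f) 0 hde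
  have h1 := hu (f, g) ⟨h, he, rfl, hdg⟩
  have hre : Λ.s f = Λ.r (Λ.ident (Λ.s f)) := by rw [Λ.r_ident]
  have h2 := hu (f, Λ.ident (Λ.s f)) ⟨hre, Λ.comp_ident f hre, rfl, Λ.d_ident _⟩
  exact congrArg Prod.snd (h1.trans h2.symm)

/-- Composition of an identity with itself. -/
theorem comp_ident_ident (v : Obj) (h : Λ.s (Λ.ident v) = Λ.r (Λ.ident v)) :
    Λ.comp (Λ.ident v) (Λ.ident v) h = Λ.ident v := by
  have h2 : Λ.s (Λ.ident (Λ.r (Λ.ident v))) = Λ.r (Λ.ident v) := by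
    rw [Λ.s_ident]
  have := Λ.ident_comp (Λ.ident v) h2
  simp only [Λ.r_ident] at this
  exact this

end AuxBasic

section AuxShift

variable {k : ℕ} {Obj Mor : Type} [TopologicalSpace Obj] [TopologicalSpace Mor]
variable {Λ : TopKGraph k Obj Mor}

theorem comp_congr {f f' g g' : Mor} (hf : f = f') (hg : g = g')
    (h : Λ.s f = Λ.r g) (h' : Λ.s f' = Λ.r g') :
    Λ.comp f g h = Λ.comp f' g' h' := by subst hf; subst hg; rfl

theorem shift_dom_iff {x : KPath Λ} {p : Fin k → ℕ} (hp : x.dom p) (v : Fin k → ℕ) :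
    (∀ i, (v i : ℕ∞) ≤ x.deg i - (p i : ℕ∞)) ↔ (∀ i, (((p + v) i : ℕ) : ℕ∞) ≤ x.deg i) :=
  forall_congr' fun i => enat_le_sub_iff (hp i)

open Classical in
/-- The underlying segment function of the shift `σ^p x`. -/
noncomputable def shiftSeg (x : KPath Λ) (p : Fin k → ℕ) (u v : Fin k → ℕ) : Mor :=
  if u ≤ v ∧ ∀ i, (((p + v) i : ℕ) : ℕ∞) ≤ x.deg i then x.seg (p + u) (p + v)
  else x.seg (p + 0) (p + 0)

theorem shiftSeg_eq (x : KPath Λ) (p : Fin k → ℕ) {u v : Fin k → ℕ} (h1 : u ≤ v)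
    (h2 : ∀ i, (((p + v) i : ℕ) : ℕ∞) ≤ x.deg i) :
    shiftSeg x p u v = x.seg (p + u) (p + v) := by
  rw [shiftSeg, if_pos ⟨h1, h2⟩]

/-- The shift `σ^p x` as a `KPath`. -/
noncomputable def shiftPath (x : KPath Λ) (p : Fin k → ℕ) (hp : x.dom p) : KPath Λ where
  deg i := x.deg i - (p i : ℕ∞)
  seg := shiftSeg x p
  seg_junk := by
    intro u v h
    have hz : ∀ i, (((p + (0 : Fin k → ℕ)) i : ℕ) : ℕ∞) ≤ x.deg i := by
      intro i; simpa using hp i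
    have h' : ¬(u ≤ v ∧ ∀ i, (((p + v) i : ℕ) : ℕ∞) ≤ x.deg i) := by
      intro hc
      exact h ⟨hc.1, (shift_dom_iff hp v).2 hc.2⟩
    rw [shiftSeg, if_neg h', shiftSeg_eq x p le_rfl hz]
  d_seg := by
    intro u v huv hdom
    have hdom' := (shift_dom_iff hp v).1 hdom
    rw [shiftSeg_eq x p huv hdom', x.d_seg _ _ (add_le_add_right huv p) hdom']
    funext i
    simp only [Pi.sub_apply, Pi.add_apply]
    omega
  seg_comp := by
    intro u v w huv hvw hdom
    have hdw := (shift_dom_iff hp w).1 hdom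
    have hdv : ∀ i, (((p + v) i : ℕ) : ℕ∞) ≤ x.deg i := by
      intro i
      refine le_trans ?_ (hdw i)
      exact_mod_cast add_le_add_right hvw p i
    rw [shiftSeg_eq x p huv hdv, shiftSeg_eq x p hvw hdw, shiftSeg_eq x p (huv.trans hvw) hdw]
    exact x.seg_comp _ _ _ (add_le_add_right huv p) (add_le_add_right hvw p) hdw
  seg_ident := by
    intro u hdom
    have hdu := (shift_dom_iff hp u).1 hdom
    rw [shiftSeg_eq x p le_rfl hdu]
    exact x.seg_ident _ hdu

theorem isShiftOf_shiftPath (x : KPath Λ) (p : Fin k → ℕ) (hp : x.dom p) :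
    IsShiftOf p x (shiftPath x p hp) :=
  ⟨hp, fun _ => rfl, fun u v huv hdom => shiftSeg_eq x p huv ((shift_dom_iff hp v).1 hdom)⟩

theorem IsShiftOf.unique {p : Fin k → ℕ} {x z z' : KPath Λ} (h : IsShiftOf p x z)
    (h' : IsShiftOf p x z') : z = z' := by
  refine KPath.eq_of (by funext i; rw [h.2.1 i, h'.2.1 i]) fun u v huv hdom => ?_
  have hdom' : z.dom v := fun i => by rw [h.2.1 i, ← h'.2.1 i]; exact hdom i
  rw [h.2.2 u v huv hdom', h'.2.2 u v huv hdom]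

theorem IsShiftOf.dom_iff {p : Fin k → ℕ} {x z : KPath Λ} (h : IsShiftOf p x z)
    (v : Fin k → ℕ) : z.dom v ↔ x.dom (p + v) := by
  unfold KPath.dom
  constructor
  · intro hd i
    exact (enat_le_sub_iff (h.1 i)).1 (by rw [← h.2.1 i]; exact hd i)
  · intro hd i
    rw [h.2.1 i]
    exact (enat_le_sub_iff (h.1 i)).2 (hd i)

theorem IsShiftOf.trans {p r : Fin k → ℕ} {x z w : KPath Λ} (h1 : IsShiftOf p x z)
    (h2 : IsShiftOf r z w) : IsShiftOf (p + r) x w := by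
  refine ⟨fun i => ?_, fun i => ?_, fun u v huv hdom => ?_⟩
  · have := (enat_le_sub_iff (h1.1 i)).1 (by rw [← h1.2.1 i]; exact h2.1 i)
    exact_mod_cast this
  · rw [h2.2.1 i, h1.2.1 i, tsub_tsub, Pi.add_apply, Nat.cast_add]
  · have hzdom : z.dom (r + v) := (h2.dom_iff v).1 hdom
    rw [add_assoc, add_assoc, h2.2.2 u v huv hdom,
      h1.2.2 (r + u) (r + v) (add_le_add_right huv r) hzdom]

/-- Characterization of concatenation in terms of initial segment and shift. -/
theorem isConcatOf_iff {l : Mor} {x y : KPath Λ} :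
    IsConcatOf l x y ↔
      y.dom (Λ.d l) ∧ y.seg 0 (Λ.d l) = l ∧ IsShiftOf (Λ.d l) y x := by
  constructor
  · rintro ⟨hsrc, hdeg, hinit, htail⟩
    have hdom : y.dom (Λ.d l) := fun i => by rw [hdeg i]; exact le_self_add
    have hseg0 : y.seg 0 (Λ.d l) = l := by
      obtain ⟨a, ha, hd0, hc⟩ := hinit (Λ.d l) le_rfl
      have hda : Λ.d a = 0 := by
        have h1 := Λ.d_comp _ _ ha
        rw [hc, hd0] at h1
        have h2 : Λ.d l + 0 = Λ.d l + Λ.d a := by rw [add_zero]; exact h1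
        exact (add_left_cancel h2).symm
      exact eq_of_comp_eq_dzero ha hda hc
    have hyd : ∀ w : Fin k → ℕ, (∀ i, (w i : ℕ∞) ≤ x.deg i) →
        ∀ i, (((Λ.d l + w) i : ℕ) : ℕ∞) ≤ y.deg i := by
      intro w hw i
      rw [hdeg i, Pi.add_apply, Nat.cast_add]
      exact add_le_add_right (hw i) _
    refine ⟨hdom, hseg0, hdom, fun i => by rw [hdeg i, enat_add_sub_cancel], ?_⟩
    intro u v huv hdomv
    have key : ∀ w, (∀ i, (w i : ℕ∞) ≤ x.deg i) → ∃ h : Λ.s l = Λ.r (x.seg 0 w),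
        y.seg 0 (Λ.d l + w) = Λ.comp l (x.seg 0 w) h := by
      intro w hw
      have := htail (Λ.d l + w) le_self_add (hyd w hw)
      rwa [add_tsub_cancel_left] at this
    have hdomu : ∀ i, (u i : ℕ∞) ≤ x.deg i := fun i =>
      le_trans (Nat.cast_le.2 (huv i)) (hdomv i)
    obtain ⟨hu', hequ⟩ := key u hdomu
    obtain ⟨hv', heqv⟩ := key v hdomv
    obtain ⟨h1, he1⟩ := y.seg_comp 0 (Λ.d l + u) (Λ.d l + v) zero_le
      (add_le_add_right huv _) (hyd v hdomv)
    obtain ⟨h2, he2⟩ := x.seg_comp 0 u v zero_le huv hdomv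
    have hsf : Λ.s (Λ.comp l (x.seg 0 u) hu') = Λ.r (x.seg u v) := by
      rw [Λ.s_comp]; exact h2
    have hsf' : Λ.s (Λ.comp l (x.seg 0 u) hu') = Λ.r (y.seg (Λ.d l + u) (Λ.d l + v)) := by
      rw [← hequ]; exact h1
    have hA : Λ.comp (Λ.comp l (x.seg 0 u) hu') (x.seg u v) hsf
        = Λ.comp l (x.seg 0 v) hv' := by
      have hassoc := Λ.comp_assoc l (x.seg 0 u) (x.seg u v) hu' h2 hsf
        (by rw [Λ.r_comp]; exact hu')
      rw [hassoc]
      exact comp_congr rfl he2 _ hv'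
    have hB : Λ.comp (Λ.comp l (x.seg 0 u) hu') (y.seg (Λ.d l + u) (Λ.d l + v)) hsf'
        = Λ.comp l (x.seg 0 v) hv' := by
      rw [comp_congr hequ.symm rfl hsf' h1, he1, heqv]
    have hdd : Λ.d (x.seg u v) = Λ.d (y.seg (Λ.d l + u) (Λ.d l + v)) := by
      rw [x.d_seg u v huv hdomv, y.d_seg _ _ (add_le_add_right huv _) (hyd v hdomv)]
      funext i
      simp only [Pi.sub_apply, Pi.add_apply]
      omega
    exact comp_right_cancel hsf hsf' hdd (hA.trans hB.symm)
  · rintro ⟨hdom, hseg0, hsh⟩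
    obtain ⟨hdl, hdegs, hsegs⟩ := hsh
    have hx00 : x.seg 0 0 = y.seg (Λ.d l) (Λ.d l) := by
      have := hsegs 0 0 le_rfl x.dom_zero
      simpa using this
    refine ⟨?_, ?_, ?_, ?_⟩
    · obtain ⟨h1, _⟩ := y.seg_comp 0 (Λ.d l) (Λ.d l) zero_le le_rfl hdom
      show Λ.s l = Λ.r (x.seg 0 0)
      rw [hseg0] at h1
      rw [hx00]
      exact h1
    · intro i
      rw [hdegs i, enat_add_sub_cancel_of_le (hdom i)]
    · intro p hp
      obtain ⟨h1, he1⟩ := y.seg_comp 0 p (Λ.d l) zero_le hp hdom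
      refine ⟨y.seg p (Λ.d l), h1, ?_, by rw [he1, hseg0]⟩
      rw [y.d_seg 0 p zero_le (fun i => le_trans (Nat.cast_le.2 (hp i)) (hdom i)), tsub_zero]
    · intro p hp hdomp
      have hxd : ∀ i, (((p - Λ.d l) i : ℕ) : ℕ∞) ≤ x.deg i := by
        intro i
        rw [hdegs i, enat_le_sub_iff (hdom i)]
        have hpi : Λ.d l i ≤ p i := hp i
        have : Λ.d l i + (p - Λ.d l) i = p i := by
          simp only [Pi.sub_apply]; omega
        rw [this]
        exact hdomp i
      have hxseg : x.seg 0 (p - Λ.d l) = y.seg (Λ.d l) p := by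
        rw [hsegs 0 (p - Λ.d l) zero_le hxd, add_zero]
        congr 1
        funext i
        have hpi : Λ.d l i ≤ p i := hp i
        simp only [Pi.add_apply, Pi.sub_apply]
        omega
      obtain ⟨h1, he1⟩ := y.seg_comp 0 (Λ.d l) p zero_le hp hdomp
      rw [hseg0] at h1
      refine ⟨by rw [hxseg]; exact h1, ?_⟩
      exact he1.symm.trans (comp_congr hseg0 hxseg.symm _ _)

end AuxShift

section AuxRep

variable {k : ℕ} {Obj Mor : Type} [TopologicalSpace Obj] [TopologicalSpace Mor]
variable {Λ : TopKGraph k Obj Mor}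

theorem pi_add_sub_cancel {p P : Fin k → ℕ} (h : p ≤ P) : p + (P - p) = P := by
  funext i
  have hi : p i ≤ P i := h i
  simp only [Pi.add_apply, Pi.sub_apply]
  omega

theorem isConcatOf_of_shift {p : Fin k → ℕ} {x z : KPath Λ} (h : IsShiftOf p x z) :
    IsConcatOf (x.seg 0 p) z x := by
  have hdl : Λ.d (x.seg 0 p) = p := by rw [x.d_seg 0 p zero_le h.1, tsub_zero]
  rw [isConcatOf_iff, hdl]
  exact ⟨h.1, rfl, h⟩

theorem shift_src_eq {p q : Fin k → ℕ} {x y z : KPath Λ} (h1 : IsShiftOf p x z)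
    (h2 : IsShiftOf q y z) : Λ.s (x.seg 0 p) = Λ.s (y.seg 0 q) := by
  obtain ⟨hx1, _⟩ := x.seg_comp 0 p p zero_le le_rfl h1.1
  obtain ⟨hy1, _⟩ := y.seg_comp 0 q q zero_le le_rfl h2.1
  have ex : z.seg 0 0 = x.seg (p + 0) (p + 0) := h1.2.2 0 0 le_rfl z.dom_zero
  have ey : z.seg 0 0 = y.seg (q + 0) (q + 0) := h2.2.2 0 0 le_rfl z.dom_zero
  rw [add_zero] at ex ey
  rw [hx1, hy1, ← ex, ← ey]

/-- `(l, mu)` is a representing pair for the triple `t`. -/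
def Rep {Λ : TopKGraph k Obj Mor} (t : GTriple Λ) (l mu : Mor) : Prop :=
  ∃ x, IsConcatOf l x t.1 ∧ IsConcatOf mu x t.2.2

theorem mem_ZG_iff {t : GTriple Λ} {W : Set (Mor × Mor)} {m : Fin k → ℤ} :
    t ∈ ZG Λ W m ↔ t.2.1 = m ∧ ∃ l mu : Mor, (l, mu) ∈ W ∧ Λ.s l = Λ.s mu ∧
      (fun i => (Λ.d l i : ℤ) - (Λ.d mu i : ℤ)) = m ∧ Rep t l mu := by
  unfold ZG Rep
  simp only [Set.mem_setOf_eq]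
  constructor
  · rintro ⟨h1, ⟨l, mu⟩, hW, hs, hd, x, hx⟩
    exact ⟨h1, l, mu, hW, hs, hd, x, hx⟩
  · rintro ⟨h1, l, mu, hW, hs, hd, x, hx⟩
    exact ⟨h1, ⟨l, mu⟩, hW, hs, hd, x, hx⟩

theorem ZG_inter_diag (W : Set (Mor × Mor)) (m : Fin k → ℤ) :
    ZG Λ (W ∩ {lm | Λ.s lm.1 = Λ.s lm.2}) m = ZG Λ W m := by
  ext t
  rw [mem_ZG_iff, mem_ZG_iff]
  constructor <;> rintro ⟨h1, l, mu, hW, hs, hd, hx⟩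
  · exact ⟨h1, l, mu, hW.1, hs, hd, hx⟩
  · exact ⟨h1, l, mu, ⟨hW, hs⟩, hs, hd, hx⟩

theorem ZG_empty (m : Fin k → ℤ) : ZG Λ (∅ : Set (Mor × Mor)) m = ∅ := by
  ext t
  rw [mem_ZG_iff]
  simp

theorem m_eq_of_mem_ZG {t : GTriple Λ} {W : Set (Mor × Mor)} {m : Fin k → ℤ}
    (h : t ∈ ZG Λ W m) : t.2.1 = m := (mem_ZG_iff.1 h).1

theorem carrier_spec {t : GTriple Λ} (ht : t ∈ PathGroupoidCarrier Λ) :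
    ∃ p q : Fin k → ℕ, t.2.1 = (fun i => (p i : ℤ) - (q i : ℤ)) ∧
      ∃ z : KPath Λ, IsShiftOf p t.1 z ∧ IsShiftOf q t.2.2 z := ht

theorem exists_rep {t : GTriple Λ} (ht : t ∈ PathGroupoidCarrier Λ) :
    ∃ l mu : Mor, Λ.s l = Λ.s mu ∧
      (fun i => (Λ.d l i : ℤ) - (Λ.d mu i : ℤ)) = t.2.1 ∧ Rep t l mu := by
  obtain ⟨p, q, hm, z, h1, h2⟩ := carrier_spec ht
  refine ⟨t.1.seg 0 p, t.2.2.seg 0 q, shift_src_eq h1 h2, ?_,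
    z, isConcatOf_of_shift h1, isConcatOf_of_shift h2⟩
  rw [hm]
  funext i
  rw [t.1.d_seg 0 p zero_le h1.1, t.2.2.d_seg 0 q zero_le h2.1,
    tsub_zero, tsub_zero]

theorem mem_ZG_univ {t : GTriple Λ} (ht : t ∈ PathGroupoidCarrier Λ) {m : Fin k → ℤ}
    (hm : t.2.1 = m) : t ∈ ZG Λ (Set.univ : Set (Mor × Mor)) m := by
  obtain ⟨l, mu, hs, hd, hrep⟩ := exists_rep ht
  exact mem_ZG_iff.2 ⟨hm, l, mu, trivial, hs, hd.trans hm, hrep⟩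

end AuxRep

section AuxCocycle

variable {k : ℕ} {Obj Mor : Type} [TopologicalSpace Obj] [TopologicalSpace Mor]
variable {Λ : TopKGraph k Obj Mor}
variable {A : Type} [Group A] {c : Mor → A}

theorem seg_mul (hmul : ∀ (f g : Mor) (h : Λ.s f = Λ.r g), c (Λ.comp f g h) = c f * c g)
    {x : KPath Λ} {p q : Fin k → ℕ} (hpq : p ≤ q) (hq : x.dom q) :
    c (x.seg 0 q) = c (x.seg 0 p) * c (x.seg p q) := by
  obtain ⟨h, he⟩ := x.seg_comp 0 p q zero_le hpq hq
  rw [← he, hmul]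

theorem shift_seg0 {p r : Fin k → ℕ} {x z : KPath Λ} (h : IsShiftOf p x z)
    (hr : z.dom r) : z.seg 0 r = x.seg p (p + r) := by
  have := h.2.2 0 r zero_le hr
  rwa [add_zero] at this

theorem cocycle_welldef
    (hmul : ∀ (f g : Mor) (h : Λ.s f = Λ.r g), c (Λ.comp f g h) = c f * c g)
    {x y z z' : KPath Λ} {p q p' q' : Fin k → ℕ}
    (h1 : IsShiftOf p x z) (h2 : IsShiftOf q y z)
    (h1' : IsShiftOf p' x z') (h2' : IsShiftOf q' y z')
    (hpq : ∀ i, (p i : ℤ) - (q i : ℤ) = (p' i : ℤ) - (q' i : ℤ)) :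
    c (x.seg 0 p) * (c (y.seg 0 q))⁻¹ = c (x.seg 0 p') * (c (y.seg 0 q'))⁻¹ := by
  set P : Fin k → ℕ := p ⊔ p' with hP
  have hpP : p ≤ P := le_sup_left
  have hp'P : p' ≤ P := le_sup_right
  have hxP : x.dom P := by
    intro i
    rcases le_total (p i) (p' i) with hle | hle
    · have hPi : P i = p' i := by simp [hP, Pi.sup_apply, sup_eq_right.2 hle]
      rw [hPi]; exact h1'.1 i
    · have hPi : P i = p i := by simp [hP, Pi.sup_apply, sup_eq_left.2 hle]
      rw [hPi]; exact h1.1 i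
  have hzr : z.dom (P - p) := by
    rw [h1.dom_iff, pi_add_sub_cancel hpP]
    exact hxP
  have hz'r' : z'.dom (P - p') := by
    rw [h1'.dom_iff, pi_add_sub_cancel hp'P]
    exact hxP
  have hyQ : y.dom (q + (P - p)) := by rw [← h2.dom_iff]; exact hzr
  have hyQ' : y.dom (q' + (P - p')) := by rw [← h2'.dom_iff]; exact hz'r'
  have hsz : z.seg 0 (P - p) = x.seg p P := by
    have := shift_seg0 h1 hzr
    rwa [pi_add_sub_cancel hpP] at this
  have hsz' : z'.seg 0 (P - p') = x.seg p' P := by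
    have := shift_seg0 h1' hz'r'
    rwa [pi_add_sub_cancel hp'P] at this
  have e1 : c (x.seg 0 P) = c (x.seg 0 p) * c (z.seg 0 (P - p)) := by
    rw [seg_mul hmul hpP hxP, hsz]
  have e1' : c (x.seg 0 P) = c (x.seg 0 p') * c (z'.seg 0 (P - p')) := by
    rw [seg_mul hmul hp'P hxP, hsz']
  have e2 : c (y.seg 0 (q + (P - p))) = c (y.seg 0 q) * c (z.seg 0 (P - p)) := by
    rw [seg_mul hmul le_self_add hyQ, shift_seg0 h2 hzr]
  have e2' : c (y.seg 0 (q' + (P - p'))) = c (y.seg 0 q') * c (z'.seg 0 (P - p')) := by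
    rw [seg_mul hmul le_self_add hyQ', shift_seg0 h2' hz'r']
  have hQ : q + (P - p) = q' + (P - p') := by
    funext i
    have h1i : p i ≤ P i := hpP i
    have h2i : p' i ≤ P i := hp'P i
    have h3i := hpq i
    simp only [Pi.add_apply, Pi.sub_apply]
    omega
  have key : c (x.seg 0 P) * (c (y.seg 0 (q + (P - p))))⁻¹
      = c (x.seg 0 p) * (c (y.seg 0 q))⁻¹ := by
    rw [e1, e2]; group
  have key' : c (x.seg 0 P) * (c (y.seg 0 (q' + (P - p'))))⁻¹
      = c (x.seg 0 p') * (c (y.seg 0 q'))⁻¹ := by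
    rw [e1', e2']; group
  rw [← key, ← key', hQ]

/-- The canonical cocycle value `c̃(t)` of a path-groupoid element. -/
noncomputable def ctil (c : Mor → A) (t : PathGpd Λ) : A :=
  c (t.val.1.seg 0 (carrier_spec t.2).choose) *
    (c (t.val.2.2.seg 0 (carrier_spec t.2).choose_spec.choose))⁻¹

theorem ctil_spec
    (hmul : ∀ (f g : Mor) (h : Λ.s f = Λ.r g), c (Λ.comp f g h) = c f * c g)
    {t : PathGpd Λ} {p q : Fin k → ℕ} {z : KPath Λ}
    (hm : t.val.2.1 = fun i => (p i : ℤ) - (q i : ℤ))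
    (h1 : IsShiftOf p t.val.1 z) (h2 : IsShiftOf q t.val.2.2 z) :
    ctil c t = c (t.val.1.seg 0 p) * (c (t.val.2.2.seg 0 q))⁻¹ := by
  obtain ⟨hm0, z0, h10, h20⟩ := (carrier_spec t.2).choose_spec.choose_spec
  have := cocycle_welldef hmul h10 h20 h1 h2
    (fun i => (congrFun hm0 i).symm.trans (congrFun hm i))
  unfold ctil
  exact this

/-- `ctil` computed from a representing pair. -/
theorem ctil_eq_of_rep
    (hmul : ∀ (f g : Mor) (h : Λ.s f = Λ.r g), c (Λ.comp f g h) = c f * c g)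
    {t : PathGpd Λ} {l mu : Mor} {x : KPath Λ}
    (hc1 : IsConcatOf l x t.val.1) (hc2 : IsConcatOf mu x t.val.2.2)
    (hm : t.val.2.1 = fun i => (Λ.d l i : ℤ) - (Λ.d mu i : ℤ)) :
    ctil c t = c l * (c mu)⁻¹ := by
  obtain ⟨hdom1, hseg1, hsh1⟩ := isConcatOf_iff.1 hc1
  obtain ⟨hdom2, hseg2, hsh2⟩ := isConcatOf_iff.1 hc2
  rw [ctil_spec hmul hm hsh1 hsh2, hseg1, hseg2]

end AuxCocycle

section AuxSP

variable {k : ℕ} {Obj Mor : Type} [TopologicalSpace Obj] [TopologicalSpace Mor]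
variable {A : Type} [TopologicalSpace A] [Group A]

/-- Bundled hypotheses saying `SP` is the skew product `Λ ×_c A`. -/
structure SPHyp (Λ : TopKGraph k Obj Mor) (SP : TopKGraph k (Obj × A) (Mor × A))
    (c : Mor → A) : Prop where
  hmul : ∀ (f g : Mor) (h : Λ.s f = Λ.r g), c (Λ.comp f g h) = c f * c g
  hone : ∀ v : Obj, c (Λ.ident v) = 1
  hr : SP.r = fun p => (Λ.r p.1, p.2)
  hs : SP.s = fun p => (Λ.s p.1, p.2 * c p.1)
  hd : SP.d = fun p => Λ.d p.1
  hcomp : ∀ (f g : Mor × A) (h : SP.s f = SP.r g) (h' : Λ.s f.1 = Λ.r g.1),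
    SP.comp f g h = (Λ.comp f.1 g.1 h', f.2)

variable {Λ : TopKGraph k Obj Mor} {SP : TopKGraph k (Obj × A) (Mor × A)} {c : Mor → A}

theorem SPHyp.ident_eq (H : SPHyp Λ SP c) (v : Obj) (g : A) :
    SP.ident (v, g) = (Λ.ident v, g) := by
  set e := SP.ident (v, g) with he
  have hre : SP.r e = (v, g) := SP.r_ident _
  have hse : SP.s e = (v, g) := SP.s_ident _
  have h : SP.s e = SP.r e := by rw [hre, hse]
  have hcc : SP.comp e e h = e := comp_ident_ident (Λ := SP) (v, g) h
  have hsr : (Λ.s e.1, e.2 * c e.1) = (Λ.r e.1, e.2) := by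
    have h' := h
    simp only [H.hs, H.hr] at h'
    exact h'
  have hs1 : Λ.s e.1 = Λ.r e.1 := congrArg Prod.fst hsr
  have hd1 : Λ.d e.1 = 0 := by
    have hd0 := SP.d_ident (v, g)
    simp only [H.hd] at hd0
    exact hd0
  have hcc' := H.hcomp e e h hs1
  have hee : e = (Λ.comp e.1 e.1 hs1, e.2) := hcc.symm.trans hcc'
  have hfst : Λ.comp e.1 e.1 hs1 = e.1 := (congrArg Prod.fst hee).symm
  have hident : e.1 = Λ.ident (Λ.s e.1) := eq_ident_of_comp_eq_self hs1 hfst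
  have hrv : Λ.r e.1 = v := by
    have h' := hre
    simp only [H.hr] at h'
    exact congrArg Prod.fst h'
  have hgv : e.2 = g := by
    have h' := hre
    simp only [H.hr] at h'
    exact congrArg Prod.snd h'
  refine Prod.ext ?_ hgv
  rw [hident, hs1, hrv]

open Classical in
/-- The segment function of `φ(x, a)`. -/
noncomputable def phiSeg (c : Mor → A) (x : KPath Λ) (a : A) (p q : Fin k → ℕ) : Mor × A :=
  if p ≤ q ∧ ∀ i, (q i : ℕ∞) ≤ x.deg i then (x.seg p q, a * c (x.seg 0 p))
  else (x.seg 0 0, a * c (x.seg 0 0))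

theorem phiSeg_eq {x : KPath Λ} {a : A} {p q : Fin k → ℕ} (h1 : p ≤ q) (h2 : x.dom q) :
    phiSeg c x a p q = (x.seg p q, a * c (x.seg 0 p)) := if_pos ⟨h1, h2⟩

/-- The path `φ(x, a)` of the skew-product graph. -/
noncomputable def phiPath (H : SPHyp Λ SP c) (x : KPath Λ) (a : A) : KPath SP where
  deg := x.deg
  seg := phiSeg c x a
  seg_junk := by
    intro p q h
    rw [phiSeg, if_neg h, phiSeg_eq le_rfl x.dom_zero]
  d_seg := by
    intro p q h1 h2
    rw [phiSeg_eq h1 h2]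
    simp only [H.hd]
    exact x.d_seg p q h1 h2
  seg_comp := by
    intro p q u h1 h2 hdom
    have hdq : x.dom q := fun i => le_trans (Nat.cast_le.2 (h2 i)) (hdom i)
    rw [phiSeg_eq h1 hdq, phiSeg_eq h2 hdom, phiSeg_eq (h1.trans h2) hdom]
    obtain ⟨hx, hex⟩ := x.seg_comp p q u h1 h2 hdom
    obtain ⟨hx0, hex0⟩ := x.seg_comp 0 p q zero_le h1 hdq
    have hS : SP.s (x.seg p q, a * c (x.seg 0 p)) = SP.r (x.seg q u, a * c (x.seg 0 q)) := by
      simp only [H.hs, H.hr]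
      exact Prod.ext hx (by rw [mul_assoc, ← H.hmul _ _ hx0, hex0])
    refine ⟨hS, ?_⟩
    rw [H.hcomp _ _ hS hx]
    exact Prod.ext hex rfl
  seg_ident := by
    intro p hdom
    rw [phiSeg_eq le_rfl hdom]
    have hrv : SP.r (x.seg p p, a * c (x.seg 0 p))
        = (Λ.r (x.seg p p), a * c (x.seg 0 p)) := by simp only [H.hr]
    rw [hrv, H.ident_eq]
    exact Prod.ext (x.seg_ident p hdom) rfl

theorem phiPath_seg (H : SPHyp Λ SP c) {x : KPath Λ} {a : A} {p q : Fin k → ℕ}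
    (h1 : p ≤ q) (h2 : x.dom q) :
    (phiPath H x a).seg p q = (x.seg p q, a * c (x.seg 0 p)) := phiSeg_eq h1 h2

theorem isPhiOf_phiPath (H : SPHyp Λ SP c) (x : KPath Λ) (a : A) :
    IsPhiOf Λ SP c x a (phiPath H x a) :=
  ⟨rfl, fun _ _ h1 h2 => phiSeg_eq h1 h2⟩

theorem phiPath_seg_zero (H : SPHyp Λ SP c) {x : KPath Λ} {a : A} {q : Fin k → ℕ}
    (h2 : x.dom q) : (phiPath H x a).seg 0 q = (x.seg 0 q, a) := by
  rw [phiPath_seg H zero_le h2, x.seg_ident 0 x.dom_zero, H.hone, mul_one]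

theorem phiPath_inj (H : SPHyp Λ SP c) {x y : KPath Λ} {a b : A}
    (h : phiPath H x a = phiPath H y b) : x = y ∧ a = b := by
  have hdeg : x.deg = y.deg := congrArg (fun P : KPath SP => P.deg) h
  have hseg : ∀ p q, p ≤ q → y.dom q → x.seg p q = y.seg p q := by
    intro p q h1 h2
    have h2x : x.dom q := fun i => by rw [congrFun hdeg i]; exact h2 i
    have hc := congrArg (fun P : KPath SP => P.seg p q) h
    rw [phiPath_seg H h1 h2x, phiPath_seg H h1 h2] at hc
    exact congrArg Prod.fst hc
  have hab : a = b := by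
    have hc := congrArg (fun P : KPath SP => P.seg 0 0) h
    rw [phiPath_seg_zero H x.dom_zero, phiPath_seg_zero H y.dom_zero] at hc
    exact congrArg Prod.snd hc
  exact ⟨KPath.eq_of hdeg hseg, hab⟩

theorem shift_phiPath (H : SPHyp Λ SP c) {p : Fin k → ℕ} {x z : KPath Λ}
    (h : IsShiftOf p x z) (a : A) :
    IsShiftOf p (phiPath H x a) (phiPath H z (a * c (x.seg 0 p))) := by
  refine ⟨h.1, h.2.1, fun u v huv hdom => ?_⟩
  have hzv : z.dom v := hdom
  have hxpv : x.dom (p + v) := (h.dom_iff v).1 hzv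
  have hxpu : x.dom (p + u) := KPath.dom_mono (add_le_add_right huv p) hxpv
  have hzu : z.dom u := KPath.dom_mono huv hzv
  rw [phiPath_seg H huv hzv, phiPath_seg H (add_le_add_right huv p) hxpv]
  refine Prod.ext (h.2.2 u v huv hzv) ?_
  show a * c (x.seg 0 p) * c (z.seg 0 u) = a * c (x.seg 0 (p + u))
  rw [shift_seg0 h hzu, mul_assoc, ← seg_mul H.hmul le_self_add hxpu]

theorem isConcatOf_phi_iff (H : SPHyp Λ SP c) {l : Mor} {g : A} {x : KPath Λ} {a : A}
    {X : KPath SP} :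
    IsConcatOf (l, g) X (phiPath H x a) ↔
      g = a ∧ x.dom (Λ.d l) ∧ x.seg 0 (Λ.d l) = l ∧
        ∃ z, IsShiftOf (Λ.d l) x z ∧ X = phiPath H z (a * c l) := by
  rw [isConcatOf_iff]
  have hdl : SP.d (l, g) = Λ.d l := by simp only [H.hd]
  rw [hdl]
  constructor
  · rintro ⟨hdom, hseg, hsh⟩
    have hdomx : x.dom (Λ.d l) := hdom
    rw [phiPath_seg_zero H hdomx] at hseg
    have h1 : x.seg 0 (Λ.d l) = l := congrArg Prod.fst hseg
    have h2 : a = g := congrArg Prod.snd hseg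
    have hz := isShiftOf_shiftPath x (Λ.d l) hdomx
    have hsp := shift_phiPath H hz a
    rw [h1] at hsp
    exact ⟨h2.symm, hdomx, h1, shiftPath x (Λ.d l) hdomx, hz, hsh.unique hsp⟩
  · rintro ⟨hg, hdom, hseg, z, hz, hX⟩
    subst hg
    refine ⟨hdom, ?_, ?_⟩
    · rw [phiPath_seg_zero H hdom, hseg]
    · have hsp := shift_phiPath H hz g
      rw [hseg] at hsp
      rw [hX]
      exact hsp

open Classical in
/-- The first-component path of a path of the skew-product graph. -/
noncomputable def unphiSeg (X : KPath SP) (p q : Fin k → ℕ) : Mor :=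
  if p ≤ q ∧ ∀ i, (q i : ℕ∞) ≤ X.deg i then (X.seg p q).1 else (X.seg 0 0).1

theorem unphiSeg_eq {X : KPath SP} {p q : Fin k → ℕ} (h1 : p ≤ q) (h2 : X.dom q) :
    unphiSeg X p q = (X.seg p q).1 := if_pos ⟨h1, h2⟩

/-- The path of `Λ` underlying a path of the skew-product graph. -/
noncomputable def unphi (H : SPHyp Λ SP c) (X : KPath SP) : KPath Λ where
  deg := X.deg
  seg := unphiSeg X
  seg_junk := by
    intro p q h
    rw [unphiSeg, if_neg h, unphiSeg_eq le_rfl X.dom_zero]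
  d_seg := by
    intro p q h1 h2
    rw [unphiSeg_eq h1 h2]
    have hds := X.d_seg p q h1 h2
    simp only [H.hd] at hds
    exact hds
  seg_comp := by
    intro p q u h1 h2 hdom
    have hdq : X.dom q := fun i => le_trans (Nat.cast_le.2 (h2 i)) (hdom i)
    rw [unphiSeg_eq h1 hdq, unphiSeg_eq h2 hdom, unphiSeg_eq (h1.trans h2) hdom]
    obtain ⟨hX, heX⟩ := X.seg_comp p q u h1 h2 hdom
    have hX' : Λ.s (X.seg p q).1 = Λ.r (X.seg q u).1 := by
      have h' := hX
      simp only [H.hs, H.hr] at h'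
      exact congrArg Prod.fst h'
    refine ⟨hX', ?_⟩
    exact (congrArg Prod.fst (heX.symm.trans (H.hcomp _ _ hX hX'))).symm
  seg_ident := by
    intro p hdom
    rw [unphiSeg_eq le_rfl hdom]
    have hident := X.seg_ident p hdom
    have hrv : SP.r (X.seg p p) = (Λ.r (X.seg p p).1, (X.seg p p).2) := by
      simp only [H.hr]
    rw [hrv, H.ident_eq] at hident
    exact congrArg Prod.fst hident

theorem unphi_seg (H : SPHyp Λ SP c) {X : KPath SP} {p q : Fin k → ℕ}
    (h1 : p ≤ q) (h2 : X.dom q) : (unphi H X).seg p q = (X.seg p q).1 :=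
  unphiSeg_eq h1 h2

theorem snd_seg (H : SPHyp Λ SP c) {X : KPath SP} {p q : Fin k → ℕ}
    (h1 : p ≤ q) (h2 : X.dom q) :
    (X.seg p q).2 = (X.seg 0 0).2 * c ((X.seg 0 p).1) := by
  have hdp : X.dom p := KPath.dom_mono h1 h2
  obtain ⟨hX, _⟩ := X.seg_comp 0 p q zero_le h1 h2
  have h3 : (X.seg 0 p).2 * c ((X.seg 0 p).1) = (X.seg p q).2 := by
    have h' := hX
    simp only [H.hs, H.hr] at h'
    exact congrArg Prod.snd h'
  obtain ⟨hX0, _⟩ := X.seg_comp 0 0 p zero_le zero_le hdp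
  have h4 : (X.seg 0 0).2 * c ((X.seg 0 0).1) = (X.seg 0 p).2 := by
    have h' := hX0
    simp only [H.hs, H.hr] at h'
    exact congrArg Prod.snd h'
  have hid : c ((X.seg 0 0).1) = 1 := by
    have hident := X.seg_ident 0 X.dom_zero
    have hrv : SP.r (X.seg 0 0) = (Λ.r (X.seg 0 0).1, (X.seg 0 0).2) := by
      simp only [H.hr]
    rw [hrv, H.ident_eq] at hident
    rw [congrArg Prod.fst hident, H.hone]
  rw [← h3, ← h4, hid, mul_one]

theorem phiPath_unphi (H : SPHyp Λ SP c) (X : KPath SP) :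
    X = phiPath H (unphi H X) ((X.seg 0 0).2) := by
  refine KPath.eq_of rfl ?_
  intro p q h1 h2
  have h2X : X.dom q := h2
  have hdp : X.dom p := KPath.dom_mono h1 h2X
  rw [phiPath_seg H h1 h2X, unphi_seg H h1 h2X, unphi_seg H zero_le hdp]
  exact Prod.ext rfl (snd_seg H h1 h2X)

theorem unphi_shift (H : SPHyp Λ SP c) {P : Fin k → ℕ} {X Z : KPath SP}
    (h : IsShiftOf P X Z) : IsShiftOf P (unphi H X) (unphi H Z) := by
  refine ⟨h.1, h.2.1, fun u v huv hdom => ?_⟩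
  have hZv : Z.dom v := hdom
  have hXv : X.dom (P + v) := (h.dom_iff v).1 hZv
  rw [unphi_seg H huv hZv, unphi_seg H (add_le_add_right huv P) hXv, h.2.2 u v huv hZv]

end AuxSP

section AuxPhiMap

variable {k : ℕ} {Obj Mor : Type} [TopologicalSpace Obj] [TopologicalSpace Mor]
variable {A : Type} [TopologicalSpace A] [Group A]
variable {Λ : TopKGraph k Obj Mor} {SP : TopKGraph k (Obj × A) (Mor × A)} {c : Mor → A}

theorem KPath.dom_sup {x : KPath Λ} {p q : Fin k → ℕ} (hp : x.dom p) (hq : x.dom q) :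
    x.dom (p ⊔ q) := by
  intro i
  rcases le_total (p i) (q i) with h | h
  · have hi : (p ⊔ q) i = q i := by simp [Pi.sup_apply, sup_eq_right.2 h]
    rw [hi]; exact hq i
  · have hi : (p ⊔ q) i = p i := by simp [Pi.sup_apply, sup_eq_left.2 h]
    rw [hi]; exact hp i

theorem PhiMap_mem (H : SPHyp Λ SP c) (t : PathGpd Λ) (a : A) :
    (phiPath H t.val.1 a, t.val.2.1, phiPath H t.val.2.2 (a * ctil c t))
      ∈ PathGroupoidCarrier SP := by
  obtain ⟨p, q, hm, z, h1, h2⟩ := carrier_spec t.2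
  refine ⟨p, q, hm, phiPath H z (a * c (t.val.1.seg 0 p)), shift_phiPath H h1 a, ?_⟩
  have hsp := shift_phiPath H h2 (a * ctil c t)
  have hct : ctil c t = c (t.val.1.seg 0 p) * (c (t.val.2.2.seg 0 q))⁻¹ :=
    ctil_spec H.hmul hm h1 h2
  have hval : a * ctil c t * c (t.val.2.2.seg 0 q) = a * c (t.val.1.seg 0 p) := by
    rw [hct]; group
  rw [hval] at hsp
  exact hsp

/-- The isomorphism `G_Λ(c̃) → G_{Λ ×_c A}`. -/
noncomputable def PhiMap (H : SPHyp Λ SP c) (ta : PathGpd Λ × A) : PathGpd SP :=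
  ⟨(phiPath H ta.1.val.1 ta.2, ta.1.val.2.1,
    phiPath H ta.1.val.2.2 (ta.2 * ctil c ta.1)), PhiMap_mem H ta.1 ta.2⟩

theorem PhiMap_inj (H : SPHyp Λ SP c) : Function.Injective (PhiMap H) := by
  rintro ⟨t, a⟩ ⟨t', a'⟩ h
  have hval := congrArg Subtype.val h
  have h1 : phiPath H t.val.1 a = phiPath H t'.val.1 a' :=
    congrArg (fun v : GTriple SP => v.1) hval
  have hm : t.val.2.1 = t'.val.2.1 := congrArg (fun v : GTriple SP => v.2.1) hval
  have h2 : phiPath H t.val.2.2 (a * ctil c t) = phiPath H t'.val.2.2 (a' * ctil c t') :=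
    congrArg (fun v : GTriple SP => v.2.2) hval
  obtain ⟨hx, ha⟩ := phiPath_inj H h1
  obtain ⟨hy, _⟩ := phiPath_inj H h2
  have ht : t = t' := Subtype.ext (Prod.ext hx (Prod.ext hm hy))
  exact Prod.ext ht ha

theorem PhiMap_surj (H : SPHyp Λ SP c) : Function.Surjective (PhiMap H) := by
  rintro ⟨⟨X, m, Y⟩, hmem⟩
  obtain ⟨P, Q, hm, Z, h1, h2⟩ := carrier_spec hmem
  have hX : X = phiPath H (unphi H X) ((X.seg 0 0).2) := phiPath_unphi H X
  have hY : Y = phiPath H (unphi H Y) ((Y.seg 0 0).2) := phiPath_unphi H Y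
  have ht : (unphi H X, m, unphi H Y) ∈ PathGroupoidCarrier Λ :=
    ⟨P, Q, hm, unphi H Z, unphi_shift H h1, unphi_shift H h2⟩
  refine ⟨(⟨(unphi H X, m, unphi H Y), ht⟩, (X.seg 0 0).2), ?_⟩
  apply Subtype.ext
  show (phiPath H (unphi H X) ((X.seg 0 0).2), m,
      phiPath H (unphi H Y) ((X.seg 0 0).2 * ctil c ⟨(unphi H X, m, unphi H Y), ht⟩))
    = (X, m, Y)
  have hct : ctil c (⟨(unphi H X, m, unphi H Y), ht⟩ : PathGpd Λ)
      = c ((unphi H X).seg 0 P) * (c ((unphi H Y).seg 0 Q))⁻¹ :=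
    ctil_spec H.hmul hm (unphi_shift H h1) (unphi_shift H h2)
  have hXP : X.dom P := h1.1
  have hYQ : Y.dom Q := h2.1
  have eX : Z.seg 0 0 = X.seg P P := by
    have h' := h1.2.2 0 0 le_rfl Z.dom_zero
    rwa [add_zero] at h'
  have eY : Z.seg 0 0 = Y.seg Q Q := by
    have h' := h2.2.2 0 0 le_rfl Z.dom_zero
    rwa [add_zero] at h'
  have sX : (X.seg P P).2 = (X.seg 0 0).2 * c ((unphi H X).seg 0 P) := by
    rw [snd_seg H le_rfl hXP, unphi_seg H zero_le hXP]
  have sY : (Y.seg Q Q).2 = (Y.seg 0 0).2 * c ((unphi H Y).seg 0 Q) := by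
    rw [snd_seg H le_rfl hYQ, unphi_seg H zero_le hYQ]
  have hba : (X.seg 0 0).2 * c ((unphi H X).seg 0 P)
      = (Y.seg 0 0).2 * c ((unphi H Y).seg 0 Q) := by
    rw [← sX, ← sY, ← eX, ← eY]
  have hb : (X.seg 0 0).2 * ctil c (⟨(unphi H X, m, unphi H Y), ht⟩ : PathGpd Λ)
      = (Y.seg 0 0).2 := by
    rw [hct, ← mul_assoc, hba]; group
  rw [hb, ← hX, ← hY]

theorem ctil_mul
    (hmul : ∀ (f g : Mor) (h : Λ.s f = Λ.r g), c (Λ.comp f g h) = c f * c g)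
    {t u : PathGpd Λ} (h22 : t.val.2.2 = u.val.1)
    (hm : (t.val.1, t.val.2.1 + u.val.2.1, u.val.2.2) ∈ PathGroupoidCarrier Λ) :
    ctil c (⟨(t.val.1, t.val.2.1 + u.val.2.1, u.val.2.2), hm⟩ : PathGpd Λ)
      = ctil c t * ctil c u := by
  obtain ⟨p, q, hmt, z, h1, h2⟩ := carrier_spec t.2
  obtain ⟨p1, q1, hmu, z1, h3, h4⟩ := carrier_spec u.2
  have h2' : IsShiftOf q u.val.1 z := h22 ▸ h2
  set y := u.val.1 with hy
  set q' : Fin k → ℕ := q ⊔ p1 with hq'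
  have hydom : y.dom q' := KPath.dom_sup h2'.1 h3.1
  have hz2 : z.dom (q' - q) := by
    rw [h2'.dom_iff, pi_add_sub_cancel (le_sup_left : q ≤ q')]
    exact hydom
  have hz3 : z1.dom (q' - p1) := by
    rw [h3.dom_iff, pi_add_sub_cancel (le_sup_right : p1 ≤ q')]
    exact hydom
  have hw2 := isShiftOf_shiftPath z (q' - q) hz2
  have hw3 := isShiftOf_shiftPath z1 (q' - p1) hz3
  have S2 := h2'.trans hw2
  rw [pi_add_sub_cancel (le_sup_left : q ≤ q')] at S2
  have S3 := h3.trans hw3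
  rw [pi_add_sub_cancel (le_sup_right : p1 ≤ q')] at S3
  have hww : shiftPath z (q' - q) hz2 = shiftPath z1 (q' - p1) hz3 := S2.unique S3
  have T1 : IsShiftOf (p + (q' - q)) t.val.1 (shiftPath z (q' - q) hz2) := h1.trans hw2
  have T2 : IsShiftOf (q1 + (q' - p1)) u.val.2.2 (shiftPath z (q' - q) hz2) := by
    rw [hww]; exact h4.trans hw3
  have hm3 : (t.val.2.1 + u.val.2.1)
      = fun i => (((p + (q' - q)) i : ℕ) : ℤ) - (((q1 + (q' - p1)) i : ℕ) : ℤ) := by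
    funext i
    have e1 := congrFun hmt i
    have e2 := congrFun hmu i
    have hq1 : q i ≤ q' i := (le_sup_left : q ≤ q') i
    have hp1 : p1 i ≤ q' i := (le_sup_right : p1 ≤ q') i
    rw [Pi.add_apply, e1, e2]
    simp only [Pi.add_apply, Pi.sub_apply]
    omega
  have hct3 : ctil c (⟨(t.val.1, t.val.2.1 + u.val.2.1, u.val.2.2), hm⟩ : PathGpd Λ)
      = c (t.val.1.seg 0 (p + (q' - q))) * (c (u.val.2.2.seg 0 (q1 + (q' - p1))))⁻¹ :=
    ctil_spec hmul hm3 T1 T2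
  have ex : c (t.val.1.seg 0 (p + (q' - q)))
      = c (t.val.1.seg 0 p) * c (z.seg 0 (q' - q)) := by
    rw [seg_mul hmul le_self_add T1.1, ← shift_seg0 h1 hz2]
  have ew : c (u.val.2.2.seg 0 (q1 + (q' - p1)))
      = c (u.val.2.2.seg 0 q1) * c (z1.seg 0 (q' - p1)) := by
    rw [seg_mul hmul le_self_add (h4.trans hw3).1, ← shift_seg0 h4 hz3]
  have hyd2 : y.dom (q + (q' - q)) := by
    rw [pi_add_sub_cancel (le_sup_left : q ≤ q')]; exact hydom
  have hyd3 : y.dom (p1 + (q' - p1)) := by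
    rw [pi_add_sub_cancel (le_sup_right : p1 ≤ q')]; exact hydom
  have ey2 : c (y.seg 0 (q + (q' - q))) = c (y.seg 0 q) * c (z.seg 0 (q' - q)) := by
    rw [seg_mul hmul le_self_add hyd2, ← shift_seg0 h2' hz2]
  have ey3 : c (y.seg 0 (p1 + (q' - p1))) = c (y.seg 0 p1) * c (z1.seg 0 (q' - p1)) := by
    rw [seg_mul hmul le_self_add hyd3, ← shift_seg0 h3 hz3]
  have hidx : q + (q' - q) = p1 + (q' - p1) := by
    rw [pi_add_sub_cancel (le_sup_left : q ≤ q'),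
      pi_add_sub_cancel (le_sup_right : p1 ≤ q')]
  have hrel : c (y.seg 0 q) * c (z.seg 0 (q' - q))
      = c (y.seg 0 p1) * c (z1.seg 0 (q' - p1)) := by
    rw [← ey2, hidx, ey3]
  have spec_t : ctil c t = c (t.val.1.seg 0 p) * (c (y.seg 0 q))⁻¹ := by
    have h' := ctil_spec hmul hmt h1 h2
    rwa [h22] at h'
  have spec_u : ctil c u = c (y.seg 0 p1) * (c (u.val.2.2.seg 0 q1))⁻¹ :=
    ctil_spec hmul hmu h3 h4
  have hs2 : c (z.seg 0 (q' - q))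
      = (c (y.seg 0 q))⁻¹ * (c (y.seg 0 p1) * c (z1.seg 0 (q' - p1))) := by
    rw [← hrel]; group
  rw [hct3, ex, ew, hs2, spec_t, spec_u]
  group

theorem rep_iff {t : GTriple Λ} {l mu : Mor} :
    Rep t l mu ↔ ∃ x, IsConcatOf l x t.1 ∧ IsConcatOf mu x t.2.2 := Iff.rfl

/-- Membership of `Φ(t, a)` in a `Z`-set of the skew-product path groupoid. -/
theorem phi_mem_ZG (H : SPHyp Λ SP c) {t : PathGpd Λ} {a : A}
    {W : Set ((Mor × A) × (Mor × A))} {m : Fin k → ℤ} :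
    (PhiMap H (t, a)).val ∈ ZG SP W m ↔
      t.val.2.1 = m ∧ ∃ l mu : Mor, Λ.s l = Λ.s mu ∧
        (fun i => (Λ.d l i : ℤ) - (Λ.d mu i : ℤ)) = m ∧
        ((l, a), (mu, a * (c l * (c mu)⁻¹))) ∈ W ∧ Rep t.val l mu := by
  rw [mem_ZG_iff]
  constructor
  · rintro ⟨hm1, ⟨l, g⟩, ⟨mu, h⟩, hW, hsLM, hdLM, hrep⟩
    have hm1' : t.val.2.1 = m := hm1
    obtain ⟨X0, hcL, hcM⟩ := rep_iff.1 hrep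
    have hcL' : IsConcatOf (l, g) X0 (phiPath H t.val.1 a) := hcL
    have hcM' : IsConcatOf (mu, h) X0 (phiPath H t.val.2.2 (a * ctil c t)) := hcM
    obtain ⟨hga, hdoml, hsegl, z, hz, hX0L⟩ := (isConcatOf_phi_iff H).1 hcL'
    obtain ⟨hhb, hdomm, hsegm, z', hz', hX0M⟩ := (isConcatOf_phi_iff H).1 hcM'
    obtain ⟨hzz, _⟩ := phiPath_inj H (hX0L.symm.trans hX0M)
    have hsLM' : (Λ.s l, g * c l) = (Λ.s mu, h * c mu) := by
      have h' := hsLM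
      simp only [H.hs] at h'
      exact h'
    have hss : Λ.s l = Λ.s mu := congrArg Prod.fst hsLM'
    have hsnd : g * c l = h * c mu := congrArg Prod.snd hsLM'
    have hdd : (fun i => (Λ.d l i : ℤ) - (Λ.d mu i : ℤ)) = m := by
      have h' := hdLM
      simp only [H.hd] at h'
      exact h'
    have hh : h = g * c l * (c mu)⁻¹ := eq_mul_inv_of_mul_eq hsnd.symm
    rw [hh, hga, mul_assoc] at hW
    refine ⟨hm1', l, mu, hss, hdd, hW, z, isConcatOf_iff.2 ⟨hdoml, hsegl, hz⟩, ?_⟩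
    rw [← hzz] at hz'
    exact isConcatOf_iff.2 ⟨hdomm, hsegm, hz'⟩
  · rintro ⟨hm1, l, mu, hs, hd, hW, hrep⟩
    obtain ⟨x0, hc1, hc2⟩ := rep_iff.1 hrep
    obtain ⟨hdom1, hseg1, hsh1⟩ := isConcatOf_iff.1 hc1
    obtain ⟨hdom2, hseg2, hsh2⟩ := isConcatOf_iff.1 hc2
    have hct : ctil c t = c l * (c mu)⁻¹ :=
      ctil_eq_of_rep H.hmul hc1 hc2 (hm1.trans hd.symm)
    refine ⟨hm1, (l, a), (mu, a * (c l * (c mu)⁻¹)), hW, ?_, ?_, ?_⟩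
    · simp only [H.hs]
      exact Prod.ext hs (by group)
    · simp only [H.hd]
      exact hd
    · refine ⟨phiPath H x0 (a * c l), ?_, ?_⟩
      · exact (isConcatOf_phi_iff H).2 ⟨rfl, hdom1, hseg1, x0, hsh1, rfl⟩
      · refine (isConcatOf_phi_iff H).2 ⟨?_, hdom2, hseg2, x0, hsh2, ?_⟩
        · rw [hct]
        · congr 1
          rw [hct]
          group

end AuxPhiMap

section AuxTop

variable {k : ℕ} {Obj Mor : Type} [TopologicalSpace Obj] [TopologicalSpace Mor]
variable {Λ : TopKGraph k Obj Mor}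

theorem isOpen_pathGpd_iff {S : Set (PathGpd Λ)} :
    IsOpen S ↔ ∃ T, @IsOpen _ (groupoidTopology Λ) T ∧ S = Subtype.val ⁻¹' T := by
  letI : TopologicalSpace (GTriple Λ) := groupoidTopology Λ
  show @IsOpen _ (TopologicalSpace.induced (Subtype.val) (groupoidTopology Λ)) S ↔ _
  refine isOpen_induced_iff.trans ?_
  exact exists_congr fun T => and_congr_right fun _ => eq_comm

theorem isOpen_gen_ZG (m : Fin k → ℤ) {U V : Set Mor} {F : Set (Mor × Mor)}
    (hU : IsOpen U) (hV : IsOpen V) (hF : IsCompact F) :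
    IsOpen {T : PathGpd Λ | T.val ∈ ZG Λ ((U ×ˢ V) ∩ {lm | Λ.s lm.1 = Λ.s lm.2}) m
      ∧ T.val ∉ ZG Λ F m} := by
  rw [isOpen_pathGpd_iff]
  refine ⟨ZG Λ ((U ×ˢ V) ∩ {lm | Λ.s lm.1 = Λ.s lm.2}) m ∩ (ZG Λ F m)ᶜ,
    TopologicalSpace.GenerateOpen.basic _ ⟨m, U, V, F, hU, hV, hF, rfl⟩, rfl⟩

theorem isOpen_trace_ZG_open {U V : Set Mor} (hU : IsOpen U) (hV : IsOpen V)
    (m : Fin k → ℤ) :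
    IsOpen {T : PathGpd Λ | T.val ∈ ZG Λ ((U ×ˢ V) ∩ {lm | Λ.s lm.1 = Λ.s lm.2}) m} := by
  have hset : {T : PathGpd Λ | T.val ∈ ZG Λ ((U ×ˢ V) ∩ {lm | Λ.s lm.1 = Λ.s lm.2}) m}
      = {T : PathGpd Λ | T.val ∈ ZG Λ ((U ×ˢ V) ∩ {lm | Λ.s lm.1 = Λ.s lm.2}) m
          ∧ T.val ∉ ZG Λ (∅ : Set (Mor × Mor)) m} := by
    ext T
    simp [ZG_empty]
  rw [hset]
  exact isOpen_gen_ZG m hU hV isCompact_empty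

theorem isOpen_trace_m (m : Fin k → ℤ) :
    IsOpen {T : PathGpd Λ | T.val.2.1 = m} := by
  have hset : {T : PathGpd Λ | T.val.2.1 = m}
      = {T : PathGpd Λ | T.val ∈ ZG Λ (((Set.univ : Set Mor) ×ˢ (Set.univ : Set Mor))
          ∩ {lm | Λ.s lm.1 = Λ.s lm.2}) m} := by
    ext T
    simp only [Set.mem_setOf_eq]
    constructor
    · intro h
      rw [Set.univ_prod_univ, ZG_inter_diag]
      exact mem_ZG_univ T.2 h
    · exact fun h => m_eq_of_mem_ZG h
  rw [hset]
  exact isOpen_trace_ZG_open isOpen_univ isOpen_univ m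

theorem isOpen_trace_ne (m : Fin k → ℤ) :
    IsOpen {T : PathGpd Λ | T.val.2.1 ≠ m} := by
  have hset : {T : PathGpd Λ | T.val.2.1 ≠ m}
      = ⋃ m' ∈ {m' : Fin k → ℤ | m' ≠ m}, {T : PathGpd Λ | T.val.2.1 = m'} := by
    ext T
    simp only [Set.mem_setOf_eq, Set.mem_iUnion]
    constructor
    · intro h
      exact ⟨T.val.2.1, h, rfl⟩
    · rintro ⟨m', hm', rfl⟩
      exact hm'
  rw [hset]
  exact isOpen_biUnion fun m' _ => isOpen_trace_m m'

theorem isOpen_trace_not_ZG {F : Set (Mor × Mor)} (hF : IsCompact F) (m : Fin k → ℤ) :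
    IsOpen {T : PathGpd Λ | T.val ∉ ZG Λ F m} := by
  have hset : {T : PathGpd Λ | T.val ∉ ZG Λ F m}
      = {T : PathGpd Λ | T.val.2.1 ≠ m}
        ∪ {T : PathGpd Λ | T.val ∈ ZG Λ (((Set.univ : Set Mor) ×ˢ (Set.univ : Set Mor))
            ∩ {lm | Λ.s lm.1 = Λ.s lm.2}) m ∧ T.val ∉ ZG Λ F m} := by
    ext T
    simp only [Set.mem_setOf_eq, Set.mem_union]
    constructor
    · intro h
      by_cases hm : T.val.2.1 = m
      · refine Or.inr ⟨?_, h⟩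
        rw [Set.univ_prod_univ, ZG_inter_diag]
        exact mem_ZG_univ T.2 hm
      · exact Or.inl hm
    · rintro (h | h)
      · exact fun hmem => h (m_eq_of_mem_ZG hmem)
      · exact h.2
  rw [hset]
  exact (isOpen_trace_ne m).union (isOpen_gen_ZG m isOpen_univ isOpen_univ hF)

end AuxTop

section AuxTop2

variable {k : ℕ} {Obj Mor : Type} [TopologicalSpace Obj] [TopologicalSpace Mor]
variable {A : Type} [TopologicalSpace A] [Group A] [IsTopologicalGroup A]
variable {Λ : TopKGraph k Obj Mor} {SP : TopKGraph k (Obj × A) (Mor × A)} {c : Mor → A}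

theorem isOpen_phi_pos (H : SPHyp Λ SP c) (hc : Continuous c)
    {U' V' : Set (Mor × A)} (hU' : IsOpen U') (hV' : IsOpen V') (m : Fin k → ℤ) :
    IsOpen {ta : PathGpd Λ × A | (PhiMap H ta).val ∈ ZG SP (U' ×ˢ V') m} := by
  rw [isOpen_iff_forall_mem_open]
  rintro ⟨t, a⟩ hmem
  rw [Set.mem_setOf_eq] at hmem
  obtain ⟨hm1, l, mu, hs, hd, hW, hrep⟩ := (phi_mem_ZG H).1 hmem
  set g : Mor × Mor × A → (Mor × A) × (Mor × A) :=
    fun w => ((w.1, w.2.2), (w.2.1, w.2.2 * (c w.1 * (c w.2.1)⁻¹))) with hg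
  have hgc : Continuous g := by
    refine Continuous.prodMk (continuous_fst.prodMk (continuous_snd.comp continuous_snd))
      (Continuous.prodMk (continuous_fst.comp continuous_snd) ?_)
    exact (continuous_snd.comp continuous_snd).mul
      ((hc.comp continuous_fst).mul ((hc.comp (continuous_fst.comp continuous_snd)).inv))
  have hO : IsOpen (g ⁻¹' (U' ×ˢ V')) := (hU'.prod hV').preimage hgc
  have hmemO : (l, mu, a) ∈ g ⁻¹' (U' ×ˢ V') := hW
  obtain ⟨U2, W2, hU2, hW2, hlU2, hmW2, hsub⟩ := isOpen_prod_iff.1 hO l (mu, a) hmemO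
  obtain ⟨V2, N3, hV2, hN3, hmuV2, haN3, hsub2⟩ := isOpen_prod_iff.1 hW2 mu a hmW2
  refine ⟨{T : PathGpd Λ | T.val ∈ ZG Λ ((U2 ×ˢ V2) ∩ {lm | Λ.s lm.1 = Λ.s lm.2}) m} ×ˢ N3,
    ?_, (isOpen_trace_ZG_open hU2 hV2 m).prod hN3, ⟨?_, haN3⟩⟩
  · rintro ⟨t', a'⟩ ⟨ht', ha'⟩
    rw [Set.mem_setOf_eq] at ht' ⊢
    obtain ⟨hm1', l', mu', hWlm, hs', hd', hrep'⟩ := mem_ZG_iff.1 ht'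
    refine (phi_mem_ZG H).2 ⟨hm1', l', mu', hs', hd', ?_, hrep'⟩
    have ha'' : a' ∈ N3 := ha'
    have hmem2 : (mu', a') ∈ V2 ×ˢ N3 := ⟨hWlm.1.2, ha''⟩
    have hmem1 : (l', (mu', a')) ∈ U2 ×ˢ W2 := ⟨hWlm.1.1, hsub2 hmem2⟩
    exact hsub hmem1
  · rw [Set.mem_setOf_eq]
    exact mem_ZG_iff.2 ⟨hm1, l, mu, ⟨⟨hlU2, hmuV2⟩, hs⟩, hs, hd, hrep⟩

theorem exclusion_compact {m : Fin k → ℤ} {t : PathGpd Λ} {l mu : Mor}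
    (hC : ¬(Λ.s l = Λ.s mu ∧ Rep t.val l mu)) :
    ∃ C : Set (Mor × Mor), IsCompact C ∧ (l, mu) ∈ interior C ∧ t.val ∉ ZG Λ C m := by
  haveI := Λ.t2Mor
  haveI := Λ.locallyCompactMor
  classical
  set P1 : Mor := t.val.1.seg 0 (Λ.d l) with hP1
  set P2 : Mor := t.val.2.2.seg 0 (Λ.d mu) with hP2
  have hdl_open : IsOpen {x : Mor | Λ.d x = Λ.d l} := by
    have hpre : {x : Mor | Λ.d x = Λ.d l} = Λ.d ⁻¹' {Λ.d l} := by ext; simp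
    rw [hpre]
    exact (isOpen_discrete _).preimage Λ.continuous_d
  have hdmu_open : IsOpen {x : Mor | Λ.d x = Λ.d mu} := by
    have hpre : {x : Mor | Λ.d x = Λ.d mu} = Λ.d ⁻¹' {Λ.d mu} := by ext; simp
    rw [hpre]
    exact (isOpen_discrete _).preimage Λ.continuous_d
  by_cases hgood : t.val.1.dom (Λ.d l) ∧ t.val.2.2.dom (Λ.d mu) ∧
      Λ.s P1 = Λ.s P2 ∧ Rep t.val P1 P2
  · have hne : l ≠ P1 ∨ mu ≠ P2 := by
      by_contra h'
      push_neg at h'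
      exact hC (by rw [h'.1, h'.2]; exact ⟨hgood.2.2.1, hgood.2.2.2⟩)
    obtain ⟨A1, A2, hA1, hA2, hlA1, hmuA2, hav⟩ :
        ∃ A1 A2 : Set Mor, IsOpen A1 ∧ IsOpen A2 ∧ l ∈ A1 ∧ mu ∈ A2 ∧
          (P1 ∉ A1 ∨ P2 ∉ A2) := by
      rcases hne with h' | h'
      · obtain ⟨u, v, hu, hv, hlu, hPv, hdisj⟩ := t2_separation h'
        exact ⟨u, Set.univ, hu, isOpen_univ, hlu, trivial,
          Or.inl fun hP1u => Set.disjoint_left.1 hdisj hP1u hPv⟩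
      · obtain ⟨u, v, hu, hv, hmuu, hPv, hdisj⟩ := t2_separation h'
        exact ⟨Set.univ, u, isOpen_univ, hu, trivial, hmuu,
          Or.inr fun hP2u => Set.disjoint_left.1 hdisj hP2u hPv⟩
    obtain ⟨K1, hK1n, hK1sub, hK1c⟩ :=
      local_compact_nhds ((hdl_open.inter hA1).mem_nhds ⟨rfl, hlA1⟩)
    obtain ⟨K2, hK2n, hK2sub, hK2c⟩ :=
      local_compact_nhds ((hdmu_open.inter hA2).mem_nhds ⟨rfl, hmuA2⟩)
    refine ⟨K1 ×ˢ K2, hK1c.prod hK2c, ?_, ?_⟩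
    · rw [interior_prod_eq]
      exact ⟨mem_interior_iff_mem_nhds.2 hK1n, mem_interior_iff_mem_nhds.2 hK2n⟩
    · intro hmem'
      obtain ⟨hm', l', mu', hCmem, hs', hd', hrep'⟩ := mem_ZG_iff.1 hmem'
      obtain ⟨x0, hc1, hc2⟩ := rep_iff.1 hrep'
      have hd1 : Λ.d l' = Λ.d l := (hK1sub hCmem.1).1
      have hd2 : Λ.d mu' = Λ.d mu := (hK2sub hCmem.2).1
      have he1 : P1 = l' := by
        rw [hP1, ← hd1]
        exact (isConcatOf_iff.1 hc1).2.1
      have he2 : P2 = mu' := by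
        rw [hP2, ← hd2]
        exact (isConcatOf_iff.1 hc2).2.1
      rcases hav with h' | h'
      · exact h' (by rw [he1]; exact (hK1sub hCmem.1).2)
      · exact h' (by rw [he2]; exact (hK2sub hCmem.2).2)
  · obtain ⟨K1, hK1n, hK1sub, hK1c⟩ :=
      local_compact_nhds (hdl_open.mem_nhds rfl)
    obtain ⟨K2, hK2n, hK2sub, hK2c⟩ :=
      local_compact_nhds (hdmu_open.mem_nhds rfl)
    refine ⟨K1 ×ˢ K2, hK1c.prod hK2c, ?_, ?_⟩
    · rw [interior_prod_eq]
      exact ⟨mem_interior_iff_mem_nhds.2 hK1n, mem_interior_iff_mem_nhds.2 hK2n⟩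
    · intro hmem'
      obtain ⟨hm', l', mu', hCmem, hs', hd', hrep'⟩ := mem_ZG_iff.1 hmem'
      obtain ⟨x0, hc1, hc2⟩ := rep_iff.1 hrep'
      have hio1 := isConcatOf_iff.1 hc1
      have hio2 := isConcatOf_iff.1 hc2
      have hd1 : Λ.d l' = Λ.d l := hK1sub hCmem.1
      have hd2 : Λ.d mu' = Λ.d mu := hK2sub hCmem.2
      have he1 : P1 = l' := by
        rw [hP1, ← hd1]
        exact hio1.2.1
      have he2 : P2 = mu' := by
        rw [hP2, ← hd2]
        exact hio2.2.1
      apply hgood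
      refine ⟨?_, ?_, ?_, ?_⟩
      · have h'' := hio1.1
        rwa [hd1] at h''
      · have h'' := hio2.1
        rwa [hd2] at h''
      · rw [he1, he2]; exact hs'
      · rw [he1, he2]; exact hrep'

theorem isOpen_phi_neg (H : SPHyp Λ SP c) (hc : Continuous c) [T2Space A]
    {F' : Set ((Mor × A) × (Mor × A))} (hF' : IsCompact F') (m : Fin k → ℤ) :
    IsOpen {ta : PathGpd Λ × A | (PhiMap H ta).val ∉ ZG SP F' m} := by
  rw [isOpen_iff_forall_mem_open]
  rintro ⟨t, a⟩ hmem
  rw [Set.mem_setOf_eq] at hmem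
  by_cases hm1 : t.val.2.1 = m
  swap
  · refine ⟨{T : PathGpd Λ | T.val.2.1 ≠ m} ×ˢ Set.univ, ?_,
      (isOpen_trace_ne m).prod isOpen_univ, hm1, trivial⟩
    rintro ⟨t', a'⟩ ⟨ht', -⟩
    rw [Set.mem_setOf_eq]
    intro hbad
    exact ht' ((phi_mem_ZG H).1 hbad).1
  have key : ∀ φ ∈ F', ∃ (O : Set ((Mor × A) × (Mor × A))) (P : Set (PathGpd Λ × A)),
      IsOpen O ∧ φ ∈ O ∧ IsOpen P ∧ (t, a) ∈ P ∧
      ∀ (t' : PathGpd Λ) (a' : A), (t', a') ∈ P → t'.val.2.1 = m →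
        ∀ l' mu' : Mor, ((l', a'), (mu', a' * (c l' * (c mu')⁻¹))) ∈ O →
          ¬(Λ.s l' = Λ.s mu' ∧ (fun i => (Λ.d l' i : ℤ) - (Λ.d mu' i : ℤ)) = m
            ∧ Rep t'.val l' mu') := by
    rintro ⟨⟨l, g⟩, ⟨mu, h⟩⟩ hφ
    by_cases hga : g = a
    swap
    · obtain ⟨G, N, hG, hN, hgG, haN, hdisj⟩ := t2_separation hga
      refine ⟨(Set.univ ×ˢ G) ×ˢ Set.univ, Set.univ ×ˢ N,
        (isOpen_univ.prod hG).prod isOpen_univ, ⟨⟨trivial, hgG⟩, trivial⟩,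
        isOpen_univ.prod hN, ⟨trivial, haN⟩, ?_⟩
      rintro t' a' ⟨-, ha'N⟩ - l' mu' hO
      have ha'' : a' ∈ N := ha'N
      exact fun _ => Set.disjoint_left.1 hdisj hO.1.2 ha''
    by_cases hhb : h = a * (c l * (c mu)⁻¹)
    swap
    · obtain ⟨Hh, H2, hHh, hH2, hhH, hvH2, hdisj⟩ := t2_separation hhb
      have hfc : Continuous (fun w : Mor × Mor × A => w.2.2 * (c w.1 * (c w.2.1)⁻¹)) :=
        (continuous_snd.comp continuous_snd).mul
          ((hc.comp continuous_fst).mul ((hc.comp (continuous_fst.comp continuous_snd)).inv))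
      have hOp : IsOpen ((fun w : Mor × Mor × A => w.2.2 * (c w.1 * (c w.2.1)⁻¹)) ⁻¹' H2) :=
        hH2.preimage hfc
      have hfm : (l, mu, a) ∈ (fun w : Mor × Mor × A => w.2.2 * (c w.1 * (c w.2.1)⁻¹)) ⁻¹' H2 := by
        rw [Set.mem_preimage]
        exact hvH2
      obtain ⟨Ul, W2, hUl, hW2, hlUl, hmW2, hsub⟩ := isOpen_prod_iff.1 hOp l (mu, a) hfm
      obtain ⟨Umu, N, hUmu, hN, hmuUmu, haN, hsub2⟩ := isOpen_prod_iff.1 hW2 mu a hmW2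
      refine ⟨(Ul ×ˢ Set.univ) ×ˢ (Umu ×ˢ Hh), Set.univ ×ˢ N,
        (hUl.prod isOpen_univ).prod (hUmu.prod hHh), ⟨⟨hlUl, trivial⟩, hmuUmu, hhH⟩,
        isOpen_univ.prod hN, ⟨trivial, haN⟩, ?_⟩
      rintro t' a' ⟨-, ha'N⟩ - l' mu' hO
      have ha'' : a' ∈ N := ha'N
      have hmem2 : (mu', a') ∈ Umu ×ˢ N := ⟨hO.2.1, ha''⟩
      have hmem1 : (l', (mu', a')) ∈ Ul ×ˢ W2 := ⟨hO.1.1, hsub2 hmem2⟩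
      have hin : a' * (c l' * (c mu')⁻¹) ∈ H2 := hsub hmem1
      exact fun _ => Set.disjoint_left.1 hdisj hO.2.2 hin
    subst hga
    subst hhb
    by_cases hdm : (fun i => (Λ.d l i : ℤ) - (Λ.d mu i : ℤ)) = m
    swap
    · refine ⟨{LM : (Mor × A) × (Mor × A) | Λ.d LM.1.1 = Λ.d l ∧ Λ.d LM.2.1 = Λ.d mu},
        Set.univ, ?_, ⟨rfl, rfl⟩, isOpen_univ, trivial, ?_⟩
      · have hcd : Continuous (fun LM : (Mor × A) × (Mor × A) => (Λ.d LM.1.1, Λ.d LM.2.1)) :=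
          (Λ.continuous_d.comp (continuous_fst.comp continuous_fst)).prodMk
            (Λ.continuous_d.comp (continuous_fst.comp continuous_snd))
        have hpre : {LM : (Mor × A) × (Mor × A) | Λ.d LM.1.1 = Λ.d l ∧ Λ.d LM.2.1 = Λ.d mu}
            = (fun LM : (Mor × A) × (Mor × A) => (Λ.d LM.1.1, Λ.d LM.2.1)) ⁻¹'
                {(Λ.d l, Λ.d mu)} := by
          ext LM
          simp [Prod.ext_iff]
        rw [hpre]
        exact (isOpen_discrete _).preimage hcd
      · rintro t' a' - - l' mu' hO ⟨-, hd', -⟩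
        apply hdm
        rw [← hd']
        funext i
        rw [hO.1, hO.2]
    have hC : ¬(Λ.s l = Λ.s mu ∧ Rep t.val l mu) := by
      rintro ⟨hs0, hrep0⟩
      exact hmem ((phi_mem_ZG H).2 ⟨hm1, l, mu, hs0, hdm, hφ, hrep0⟩)
    obtain ⟨C, hCc, hCint, hCnot⟩ := exclusion_compact (m := m) hC
    refine ⟨{LM : (Mor × A) × (Mor × A) | (LM.1.1, LM.2.1) ∈ interior C},
      {T : PathGpd Λ | T.val ∉ ZG Λ C m} ×ˢ Set.univ, ?_, hCint,
      (isOpen_trace_not_ZG hCc m).prod isOpen_univ, ⟨hCnot, trivial⟩, ?_⟩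
    · have hcd : Continuous (fun LM : (Mor × A) × (Mor × A) => (LM.1.1, LM.2.1)) :=
        (continuous_fst.comp continuous_fst).prodMk (continuous_fst.comp continuous_snd)
      exact isOpen_interior.preimage hcd
    · rintro t' a' ⟨ht', -⟩ hm' l' mu' hO ⟨hs', hd', hrep'⟩
      have ht'' : t'.val ∉ ZG Λ C m := ht'
      exact ht'' (mem_ZG_iff.2 ⟨hm', l', mu', interior_subset hO, hs', hd', hrep'⟩)
  choose O P hO hφO hP htaP hex using key
  obtain ⟨s, hcov⟩ := hF'.elim_nhds_subcover' (fun φ hφ => O φ hφ)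
    (fun φ hφ => (hO φ hφ).mem_nhds (hφO φ hφ))
  refine ⟨⋂ φ ∈ s, P φ φ.2, ?_, ?_, ?_⟩
  · rintro ⟨t', a'⟩ hP'
    rw [Set.mem_setOf_eq]
    intro hbad
    obtain ⟨hm', l', mu', hs', hd', hWF, hrep'⟩ := (phi_mem_ZG H).1 hbad
    obtain ⟨φ, hφs, hψO⟩ := Set.mem_iUnion₂.1 (hcov hWF)
    exact hex φ φ.2 t' a' (Set.mem_iInter₂.1 hP' φ hφs) hm' l' mu' hψO ⟨hs', hd', hrep'⟩
  · exact isOpen_biInter_finset fun φ _ => hP φ φ.2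
  · exact Set.mem_iInter₂.2 fun φ _ => htaP φ φ.2

theorem continuous_PhiMap (H : SPHyp Λ SP c) (hc : Continuous c) [T2Space A] :
    Continuous (PhiMap H) := by
  rw [continuous_def]
  intro S hS
  rw [isOpen_pathGpd_iff] at hS
  obtain ⟨T, hT, rfl⟩ := hS
  have hpre : PhiMap H ⁻¹' (Subtype.val ⁻¹' T) = (fun ta => (PhiMap H ta).val) ⁻¹' T := rfl
  show IsOpen ((fun ta => (PhiMap H ta).val) ⁻¹' T)
  clear hpre
  induction hT with
  | basic s hs =>
    obtain ⟨m, U', V', F', hU', hV', hF', rfl⟩ := hs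
    have hsplit : (fun ta : PathGpd Λ × A => (PhiMap H ta).val) ⁻¹'
        (ZG SP ((U' ×ˢ V') ∩ {lm | SP.s lm.1 = SP.s lm.2}) m ∩ (ZG SP F' m)ᶜ)
        = {ta : PathGpd Λ × A | (PhiMap H ta).val ∈ ZG SP (U' ×ˢ V') m}
          ∩ {ta : PathGpd Λ × A | (PhiMap H ta).val ∉ ZG SP F' m} := by
      rw [ZG_inter_diag]
      rfl
    rw [hsplit]
    exact (isOpen_phi_pos H hc hU' hV' m).inter (isOpen_phi_neg H hc hF' m)
  | univ => simp
  | inter s t' hs ht' ihs iht' =>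
    rw [Set.preimage_inter]
    exact ihs.inter iht'
  | sUnion S hS ih =>
    rw [Set.preimage_sUnion]
    exact isOpen_biUnion ih

theorem image_phi_pos (H : SPHyp Λ SP c) {U V : Set Mor} {N : Set A}
    (hU : IsOpen U) (hV : IsOpen V) (hN : IsOpen N) (m : Fin k → ℤ)
    {t : PathGpd Λ} {a : A}
    (ht : t.val ∈ ZG Λ ((U ×ˢ V) ∩ {lm | Λ.s lm.1 = Λ.s lm.2}) m) (ha : a ∈ N) :
    ∃ S : Set (PathGpd SP), IsOpen S ∧ PhiMap H (t, a) ∈ S ∧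
      S ⊆ PhiMap H ''
        ({T : PathGpd Λ | T.val ∈ ZG Λ ((U ×ˢ V) ∩ {lm | Λ.s lm.1 = Λ.s lm.2}) m} ×ˢ N) := by
  refine ⟨{T : PathGpd SP | T.val ∈ ZG SP (((U ×ˢ N) ×ˢ (V ×ˢ (Set.univ : Set A)))
      ∩ {lm | SP.s lm.1 = SP.s lm.2}) m},
    isOpen_trace_ZG_open (hU.prod hN) (hV.prod isOpen_univ) m, ?_, ?_⟩
  · rw [Set.mem_setOf_eq, ZG_inter_diag]
    obtain ⟨hm1, l, mu, hW, hs, hd, hrep⟩ := mem_ZG_iff.1 ht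
    exact (phi_mem_ZG H).2 ⟨hm1, l, mu, hs, hd, ⟨⟨hW.1.1, ha⟩, hW.1.2, trivial⟩, hrep⟩
  · rintro T hT
    rw [Set.mem_setOf_eq, ZG_inter_diag] at hT
    obtain ⟨⟨t', a'⟩, rfl⟩ := PhiMap_surj H T
    obtain ⟨hm1, l, mu, hs, hd, hW, hrep⟩ := (phi_mem_ZG H).1 hT
    refine ⟨(t', a'), ⟨?_, hW.1.2⟩, rfl⟩
    rw [Set.mem_setOf_eq]
    exact mem_ZG_iff.2 ⟨hm1, l, mu, ⟨⟨hW.1.1, hW.2.1⟩, hs⟩, hs, hd, hrep⟩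

theorem image_phi_neg (H : SPHyp Λ SP c) (hc : Continuous c) [LocallyCompactSpace A]
    {F : Set (Mor × Mor)} {N : Set A} (hF : IsCompact F) (hN : IsOpen N) (m : Fin k → ℤ)
    {t : PathGpd Λ} {a : A} (ht : t.val ∉ ZG Λ F m) (ha : a ∈ N) :
    ∃ S : Set (PathGpd SP), IsOpen S ∧ PhiMap H (t, a) ∈ S ∧
      S ⊆ PhiMap H '' ({T : PathGpd Λ | T.val ∉ ZG Λ F m} ×ˢ N) := by
  by_cases hm1 : t.val.2.1 = m
  swap
  · refine ⟨{T : PathGpd SP | T.val ∈ ZG SP ((((Set.univ : Set Mor) ×ˢ N)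
        ×ˢ ((Set.univ : Set Mor) ×ˢ (Set.univ : Set A)))
        ∩ {lm | SP.s lm.1 = SP.s lm.2}) t.val.2.1},
      isOpen_trace_ZG_open (isOpen_univ.prod hN) (isOpen_univ.prod isOpen_univ) _, ?_, ?_⟩
    · rw [Set.mem_setOf_eq, ZG_inter_diag]
      obtain ⟨l, mu, hs, hd, hrep⟩ := exists_rep t.2
      exact (phi_mem_ZG H).2 ⟨rfl, l, mu, hs, hd, ⟨⟨trivial, ha⟩, trivial, trivial⟩, hrep⟩
    · rintro T hT
      rw [Set.mem_setOf_eq, ZG_inter_diag] at hT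
      obtain ⟨⟨t', a'⟩, rfl⟩ := PhiMap_surj H T
      obtain ⟨hm1', l, mu, hs, hd, hW, hrep⟩ := (phi_mem_ZG H).1 hT
      refine ⟨(t', a'), ⟨?_, hW.1.2⟩, rfl⟩
      rw [Set.mem_setOf_eq]
      intro hbad
      exact hm1 (hm1'.symm.trans (m_eq_of_mem_ZG hbad))
  · obtain ⟨K, hKc, hKn⟩ := exists_compact_mem_nhds a
    have haK : a ∈ interior K := mem_interior_iff_mem_nhds.2 hKn
    have hmap1 : Continuous (fun w : A × Mor × Mor => w.1 * (c w.2.1 * (c w.2.2)⁻¹)) :=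
      continuous_fst.mul ((hc.comp (continuous_fst.comp continuous_snd)).mul
        ((hc.comp (continuous_snd.comp continuous_snd)).inv))
    set K' : Set A :=
      (fun w : A × Mor × Mor => w.1 * (c w.2.1 * (c w.2.2)⁻¹)) '' (K ×ˢ F) with hK'def
    have hK'c : IsCompact K' := (hKc.prod hF).image hmap1
    have hmap2 : Continuous (fun w : (Mor × Mor) × A × A =>
        ((w.1.1, w.2.1), (w.1.2, w.2.2))) :=
      ((continuous_fst.comp continuous_fst).prodMk (continuous_fst.comp continuous_snd)).prodMk
        ((continuous_snd.comp continuous_fst).prodMk (continuous_snd.comp continuous_snd))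
    set F' : Set ((Mor × A) × (Mor × A)) :=
      (fun w : (Mor × Mor) × A × A => ((w.1.1, w.2.1), (w.1.2, w.2.2)))
        '' (F ×ˢ (K ×ˢ K')) with hF'def
    have hF'c : IsCompact F' := (hF.prod (hKc.prod hK'c)).image hmap2
    refine ⟨{T : PathGpd SP | T.val ∈ ZG SP ((((Set.univ : Set Mor) ×ˢ (N ∩ interior K))
        ×ˢ ((Set.univ : Set Mor) ×ˢ (Set.univ : Set A)))
        ∩ {lm | SP.s lm.1 = SP.s lm.2}) m ∧ T.val ∉ ZG SP F' m},
      isOpen_gen_ZG m (isOpen_univ.prod (hN.inter isOpen_interior))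
        (isOpen_univ.prod isOpen_univ) hF'c, ⟨?_, ?_⟩, ?_⟩
    · rw [ZG_inter_diag]
      obtain ⟨l, mu, hs, hd, hrep⟩ := exists_rep t.2
      exact (phi_mem_ZG H).2 ⟨hm1, l, mu, hs, hd.trans hm1,
        ⟨⟨trivial, ha, haK⟩, trivial, trivial⟩, hrep⟩
    · intro hbad
      obtain ⟨hm1', l, mu, hs, hd, hWF, hrep⟩ := (phi_mem_ZG H).1 hbad
      obtain ⟨w, hwmem, hweq⟩ := hWF
      have hwl : w.1.1 = l := congrArg (fun p : (Mor × A) × (Mor × A) => p.1.1) hweq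
      have hwmu : w.1.2 = mu := congrArg (fun p : (Mor × A) × (Mor × A) => p.2.1) hweq
      have hwF : (l, mu) ∈ F := by
        have hw1 : w.1 = (l, mu) := Prod.ext hwl hwmu
        rw [← hw1]
        exact hwmem.1
      exact ht (mem_ZG_iff.2 ⟨hm1, l, mu, hwF, hs, hd, hrep⟩)
    · rintro T ⟨hTpos, hTneg⟩
      rw [ZG_inter_diag] at hTpos
      obtain ⟨⟨t', a'⟩, rfl⟩ := PhiMap_surj H T
      obtain ⟨hm1', l, mu, hs, hd, hW, hrep⟩ := (phi_mem_ZG H).1 hTpos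
      have haN : a' ∈ N := hW.1.2.1
      have haK' : a' ∈ K := interior_subset hW.1.2.2
      refine ⟨(t', a'), ⟨?_, haN⟩, rfl⟩
      rw [Set.mem_setOf_eq]
      intro hbad
      obtain ⟨hm2, l2, mu2, hF2, hs2, hd2, hrep2⟩ := mem_ZG_iff.1 hbad
      apply hTneg
      refine (phi_mem_ZG H).2 ⟨hm1', l2, mu2, hs2, hd2, ?_, hrep2⟩
      exact ⟨((l2, mu2), a', a' * (c l2 * (c mu2)⁻¹)),
        ⟨hF2, haK', ⟨(a', l2, mu2), ⟨haK', hF2⟩, rfl⟩⟩, rfl⟩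

theorem image_phi_univ (H : SPHyp Λ SP c) {N : Set A} (hN : IsOpen N)
    {t : PathGpd Λ} {a : A} (ha : a ∈ N) :
    ∃ S : Set (PathGpd SP), IsOpen S ∧ PhiMap H (t, a) ∈ S ∧
      S ⊆ PhiMap H '' ((Set.univ : Set (PathGpd Λ)) ×ˢ N) := by
  have ht : t.val ∈ ZG Λ (((Set.univ : Set Mor) ×ˢ (Set.univ : Set Mor))
      ∩ {lm | Λ.s lm.1 = Λ.s lm.2}) t.val.2.1 := by
    rw [Set.univ_prod_univ, ZG_inter_diag]
    exact mem_ZG_univ t.2 rfl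
  obtain ⟨S, hSo, hSm, hSs⟩ := image_phi_pos H isOpen_univ isOpen_univ hN t.val.2.1 ht ha
  exact ⟨S, hSo, hSm,
    hSs.trans (Set.image_mono (Set.prod_mono (Set.subset_univ _) le_rfl))⟩

theorem isOpenMap_PhiMap (H : SPHyp Λ SP c) (hc : Continuous c) [LocallyCompactSpace A] :
    IsOpenMap (PhiMap H) := by
  intro O hO
  rw [isOpen_iff_forall_mem_open]
  rintro X hX
  obtain ⟨⟨t, a⟩, htaO, rfl⟩ := hX
  obtain ⟨O1, N, hO1, hN, htO1, haN, hsub⟩ := isOpen_prod_iff.1 hO t a htaO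
  rw [isOpen_pathGpd_iff] at hO1
  obtain ⟨T, hT, rfl⟩ := hO1
  letI : TopologicalSpace (GTriple Λ) := groupoidTopology Λ
  have hbasis := TopologicalSpace.isTopologicalBasis_of_subbasis
    (rfl : (groupoidTopology Λ) = TopologicalSpace.generateFrom _)
  obtain ⟨v, hv_mem, htv, hvT⟩ := hbasis.exists_subset_of_mem_open htO1 hT
  obtain ⟨fs, ⟨hfs_fin, hfs_sub⟩, rfl⟩ := hv_mem
  have hQ : ∀ s : Set (GTriple Λ), ∃ S : Set (PathGpd SP),
      IsOpen S ∧ PhiMap H (t, a) ∈ S ∧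
      (s ∈ fs → S ⊆ PhiMap H '' ((Subtype.val ⁻¹' s) ×ˢ N)) := by
    intro s
    by_cases hs : s ∈ fs
    swap
    · exact ⟨Set.univ, isOpen_univ, trivial, fun h => absurd h hs⟩
    obtain ⟨m, U, V, F, hU, hV, hF, hseq⟩ := hfs_sub hs
    have hts : t.val ∈ s := Set.mem_sInter.1 htv s hs
    rw [hseq] at hts
    obtain ⟨S1, hS1o, hS1m, hS1s⟩ := image_phi_pos H hU hV hN m hts.1 haN
    obtain ⟨S2, hS2o, hS2m, hS2s⟩ := image_phi_neg H hc hF hN m hts.2 haN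
    refine ⟨S1 ∩ S2, hS1o.inter hS2o, ⟨hS1m, hS2m⟩, fun _ => ?_⟩
    intro y hy
    obtain ⟨⟨u1, b1⟩, hu1, he1⟩ := hS1s hy.1
    obtain ⟨⟨u2, b2⟩, hu2, he2⟩ := hS2s hy.2
    have heq := PhiMap_inj H (he1.trans he2.symm)
    have hu12 : u1 = u2 := congrArg Prod.fst heq
    refine ⟨(u1, b1), ⟨?_, hu1.2⟩, he1⟩
    rw [Set.mem_preimage, hseq]
    refine ⟨hu1.1, ?_⟩
    rw [hu12]
    exact hu2.1
  choose SS hSSo hSSm hSSs using hQ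
  obtain ⟨SC, hSCo, hSCm, hSCs⟩ := image_phi_univ H hN haN
  refine ⟨SC ∩ ⋂ s ∈ fs, SS s, ?_, ?_, ?_⟩
  · rintro y ⟨hyC, hyI⟩
    obtain ⟨⟨u, b⟩, hub, rfl⟩ := hSCs hyC
    have humem : ∀ s ∈ fs, u.val ∈ s := by
      intro s hs
      obtain ⟨⟨u2, b2⟩, hu2, he2⟩ := hSSs s hs (Set.mem_iInter₂.1 hyI s hs)
      have heq := PhiMap_inj H he2
      have h12 : u2 = u := congrArg Prod.fst heq
      rw [← h12]
      exact hu2.1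
    have huT : u ∈ Subtype.val ⁻¹' T := hvT (Set.mem_sInter.2 humem)
    exact Set.mem_image_of_mem _ (hsub ⟨huT, hub.2⟩)
  · exact hSCo.inter (hfs_fin.isOpen_biInter fun s _ => hSSo s)
  · exact ⟨hSCm, Set.mem_iInter₂.2 fun s hs => hSSm s⟩

end AuxTop2

end TKG

open TKG in
/-- The skew-product groupoid `G_Λ(c̃)` is isomorphic as a topological groupoid to the
path groupoid `G_{Λ ×_c A}` of the skew-product `k`-graph, via the map sending
`((λx, d(λ)−d(μ), μx), a)` to `(φ(λx, a), d(λ)−d(μ), φ(μx, a·c(λ)c(μ)⁻¹))`, where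
`φ(x,a)(m,n) = (x(m,n), a·c(x(0,m)))`.  (The skew product of `G_Λ` by `c̃` has carrier
`G_Λ × A` with multiplication `(x,g)(y,g·c̃(x)) = (xy,g)`, and
`c̃(λx, d(λ)−d(μ), μx) = c(λ)c(μ)⁻¹`.) -/
theorem skew_product_groupoid_iso
    {k : ℕ} {Obj Mor : Type} [TopologicalSpace Obj] [TopologicalSpace Mor]
    (Λ : TopKGraph k Obj Mor) (hΛ : CompactlyAligned Λ)
    (A : Type) [TopologicalSpace A] [Group A] [IsTopologicalGroup A]
    [LocallyCompactSpace A] [T2Space A] [SecondCountableTopology A]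
    (c : Mor → A) (hc : Continuous c)
    (hmul : ∀ (f g : Mor) (h : Λ.s f = Λ.r g), c (Λ.comp f g h) = c f * c g)
    (hone : ∀ v : Obj, c (Λ.ident v) = 1)
    -- `SP` is the skew-product `k`-graph `Λ ×_c A`:
    (SP : TopKGraph k (Obj × A) (Mor × A))
    (hr : SP.r = fun p => (Λ.r p.1, p.2))
    (hs : SP.s = fun p => (Λ.s p.1, p.2 * c p.1))
    (hd : SP.d = fun p => Λ.d p.1)
    (hcomp : ∀ (f g : Mor × A) (h : SP.s f = SP.r g) (h' : Λ.s f.1 = Λ.r g.1),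
      SP.comp f g h = (Λ.comp f.1 g.1 h', f.2)) :
    ∃ Φ : PathGpd Λ × A → PathGpd SP,
      Function.Bijective Φ ∧ Continuous Φ ∧ IsOpenMap Φ ∧
      -- the defining formula of `Φ` on each representation
      (∀ (t : PathGpd Λ) (a : A) (l mu : Mor) (x : KPath Λ),
        IsConcatOf l x t.val.1 → IsConcatOf mu x t.val.2.2 →
        t.val.2.1 = (fun i => (Λ.d l i : ℤ) - (Λ.d mu i : ℤ)) →
        (Φ (t, a)).val.2.1 = t.val.2.1 ∧
        IsPhiOf Λ SP c t.val.1 a (Φ (t, a)).val.1 ∧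
        IsPhiOf Λ SP c t.val.2.2 (a * (c l * (c mu)⁻¹)) (Φ (t, a)).val.2.2) ∧
      -- `Φ` intertwines the skew-product multiplication of `G_Λ(c̃)` with the
      -- multiplication of `G_{Λ ×_c A}`
      (∀ (t u : PathGpd Λ) (a : A) (l mu : Mor) (x : KPath Λ),
        IsConcatOf l x t.val.1 → IsConcatOf mu x t.val.2.2 →
        t.val.2.1 = (fun i => (Λ.d l i : ℤ) - (Λ.d mu i : ℤ)) →
        t.val.2.2 = u.val.1 →
        ∀ hm : (t.val.1, t.val.2.1 + u.val.2.1, u.val.2.2) ∈ PathGroupoidCarrier Λ,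
        (Φ (⟨(t.val.1, t.val.2.1 + u.val.2.1, u.val.2.2), hm⟩, a)).val =
          ((Φ (t, a)).val.1, t.val.2.1 + u.val.2.1,
            (Φ (u, a * (c l * (c mu)⁻¹))).val.2.2)) := by
  have H : SPHyp Λ SP c := ⟨hmul, hone, hr, hs, hd, hcomp⟩
  refine ⟨PhiMap H, ⟨PhiMap_inj H, PhiMap_surj H⟩, continuous_PhiMap H hc,
    isOpenMap_PhiMap H hc, ?_, ?_⟩
  · intro t a l mu x hc1 hc2 hm21
    refine ⟨rfl, isPhiOf_phiPath H t.val.1 a, ?_⟩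
    have hmm : a * ctil c t = a * (c l * (c mu)⁻¹) := by
      rw [ctil_eq_of_rep hmul hc1 hc2 hm21]
    rw [← hmm]
    exact isPhiOf_phiPath H t.val.2.2 (a * ctil c t)
  · intro t u a l mu x hc1 hc2 hm21 h22 hm
    have hct : ctil c t = c l * (c mu)⁻¹ := ctil_eq_of_rep hmul hc1 hc2 hm21
    have hmul3 := ctil_mul hmul h22 hm
    refine Prod.ext rfl (Prod.ext rfl ?_)
    show phiPath H u.val.2.2
        (a * ctil c (⟨(t.val.1, t.val.2.1 + u.val.2.1, u.val.2.2), hm⟩ : PathGpd Λ))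
      = phiPath H u.val.2.2 ((a * (c l * (c mu)⁻¹)) * ctil c u)
    rw [hmul3, hct, mul_assoc a (c l * (c mu)⁻¹) (ctil c u)]
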